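/- arXiv:2512.12361 — 8 statements merged into one kernel-verified Lean document; each statement's English description precedes it below -/
import Mathlib

section
/- Let (X,d) be a metric space, Ω, Δ nonempty subsets of X, and Ξ : X → X a cyclic orbital contraction on Ω ∪ Δ with constant η ∈ (0,1). Fix ς₀ ∈ Ω and define ς_{n+1} = Ξς_n for all n ≥ 0. Then d(ς_n, ς_{n+1}) → dist(Ω,Δ) as n → ∞. (This is Proposition 2.4 of the paper; its proof uses only the metric-space structure, so it is stated here for a general metric space.) -/
open Filter Metric

theorem stmt0 {X : Type*} [MetricSpace X] (Ω Δ : Set X)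
    (hΩ : Ω.Nonempty) (hΔ : Δ.Nonempty) (Ξ : X → X) (η : ℝ) (hη : η ∈ Set.Ioo (0 : ℝ) 1)
    (hcycΩ : Set.MapsTo Ξ Ω Δ) (hcycΔ : Set.MapsTo Ξ Δ Ω)
    (hbdd : ∀ x : X, Bornology.IsBounded (Set.range fun n => Ξ^[n] x))
    (hcontr : ∀ ς ∈ Ω, ∀ ϑ ∈ Δ,
      dist (Ξ ς) (Ξ ϑ) ≤ η * sSup { r : ℝ |
      (∃ i j : ℕ, Odd ((i : ℤ) - j) ∧ r = dist (Ξ^[i] ς) (Ξ^[j] ς)) ∨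
      (∃ k l : ℕ, Odd ((k : ℤ) - l) ∧ r = dist (Ξ^[k] ϑ) (Ξ^[l] ϑ)) ∨
      (∃ p q : ℕ, Even ((p : ℤ) - q) ∧ r = dist (Ξ^[p] ς) (Ξ^[q] ϑ)) }
        + (1 - η) * sInf (Set.image2 dist Ω Δ))
    (ς₀ : X) (hς₀ : ς₀ ∈ Ω) :
    Tendsto (fun n => dist (Ξ^[n] ς₀) (Ξ^[n + 1] ς₀)) atTop (nhds (sInf (Set.image2 dist Ω Δ))) := by
  set x : ℕ → X := fun n => Ξ^[n] ς₀ with hx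
  set D : ℝ := sInf (Set.image2 dist Ω Δ) with hD
  -- parity membership
  have hmem : ∀ n : ℕ, (n % 2 = 0 → x n ∈ Ω) ∧ (n % 2 = 1 → x n ∈ Δ) := by
    intro n
    induction n with
    | zero => exact ⟨fun _ => hς₀, fun h => by omega⟩
    | succ n ih =>
      have hstep : x (n + 1) = Ξ (x n) := Function.iterate_succ_apply' Ξ n ς₀
      constructor
      · intro h
        rw [hstep]; exact hcycΔ (ih.2 (by omega))
      · intro h
        rw [hstep]; exact hcycΩ (ih.1 (by omega))
  -- uniform bound on the orbit
  obtain ⟨C, hC⟩ := Metric.isBounded_iff.1 (hbdd ς₀)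
  have hCd : ∀ a b : ℕ, dist (x a) (x b) ≤ C := fun a b => hC ⟨a, rfl⟩ ⟨b, rfl⟩
  -- the sets S n and their sups
  set S : ℕ → Set ℝ := fun n => { r : ℝ | ∃ a b : ℕ, 2 * n ≤ a ∧ 2 * n ≤ b ∧
      Odd ((a : ℤ) - b) ∧ r = dist (x a) (x b) } with hS
  set M : ℕ → ℝ := fun n => sSup (S n) with hM
  have hSne : ∀ n, (S n).Nonempty := by
    intro n
    exact ⟨dist (x (2 * n)) (x (2 * n + 1)), 2 * n, 2 * n + 1, le_refl _, by omega,
      ⟨-1, by push_cast; ring⟩, rfl⟩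
  have hSbdd : ∀ n, BddAbove (S n) := by
    intro n
    refine ⟨C, fun r hr => ?_⟩
    obtain ⟨a, b, _, _, _, rfl⟩ := hr
    exact hCd a b
  have hbddBelow : BddBelow (Set.image2 dist Ω Δ) := by
    refine ⟨0, fun r hr => ?_⟩
    obtain ⟨u, hu, v, hv, rfl⟩ := hr
    exact dist_nonneg
  -- D is a lower bound for elements of S n
  have hDle : ∀ n r, r ∈ S n → D ≤ r := by
    intro n r hr
    obtain ⟨a, b, _, _, hodd, rfl⟩ := hr
    obtain ⟨c, hc⟩ := hodd
    have hpar : (a % 2 = 0 ∧ b % 2 = 1) ∨ (a % 2 = 1 ∧ b % 2 = 0) := by omega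
    rcases hpar with ⟨ha, hb⟩ | ⟨ha, hb⟩
    · exact csInf_le hbddBelow ⟨x a, (hmem a).1 ha, x b, (hmem b).2 hb, rfl⟩
    · rw [dist_comm]
      exact csInf_le hbddBelow ⟨x b, (hmem b).1 hb, x a, (hmem a).2 ha, rfl⟩
  have hDM : ∀ n, D ≤ M n := fun n =>
    le_trans (hDle n _ (hSne n).choose_spec) (le_csSup (hSbdd n) (hSne n).choose_spec)
  -- key contraction estimate
  have aux : ∀ n a b : ℕ, 2 * n + 1 ≤ a → 2 * n + 1 ≤ b → a % 2 = 1 → b % 2 = 0 →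
      dist (x a) (x b) ≤ η * M n + (1 - η) * D := by
    intro n a b ha hb hpa hpb
    obtain ⟨a', rfl⟩ : ∃ a', a = a' + 1 := ⟨a - 1, by omega⟩
    obtain ⟨b', rfl⟩ : ∃ b', b = b' + 1 := ⟨b - 1, by omega⟩
    have hςΩ : x a' ∈ Ω := (hmem a').1 (by omega)
    have hϑΔ : x b' ∈ Δ := (hmem b').2 (by omega)
    have hc := hcontr (x a') hςΩ (x b') hϑΔ
    have e1 : Ξ (x a') = x (a' + 1) := (Function.iterate_succ_apply' Ξ a' ς₀).symm
    have e2 : Ξ (x b') = x (b' + 1) := (Function.iterate_succ_apply' Ξ b' ς₀).symm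
    rw [e1, e2] at hc
    refine hc.trans ?_
    have hiter : ∀ i c : ℕ, Ξ^[i] (x c) = x (i + c) := fun i c =>
      (Function.iterate_add_apply Ξ i c ς₀).symm
    have hsub : { r : ℝ |
        (∃ i j : ℕ, Odd ((i : ℤ) - j) ∧ r = dist (Ξ^[i] (x a')) (Ξ^[j] (x a'))) ∨
        (∃ k l : ℕ, Odd ((k : ℤ) - l) ∧ r = dist (Ξ^[k] (x b')) (Ξ^[l] (x b'))) ∨
        (∃ p q : ℕ, Even ((p : ℤ) - q) ∧ r = dist (Ξ^[p] (x a')) (Ξ^[q] (x b'))) } ⊆ S n := by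
      rintro r (⟨i, j, hij, rfl⟩ | ⟨k, l, hkl, rfl⟩ | ⟨p, q, hpq, rfl⟩)
      · rw [Int.odd_iff] at hij
        exact ⟨i + a', j + a', by omega, by omega, by rw [Int.odd_iff]; omega,
          by rw [hiter, hiter]⟩
      · rw [Int.odd_iff] at hkl
        exact ⟨k + b', l + b', by omega, by omega, by rw [Int.odd_iff]; omega,
          by rw [hiter, hiter]⟩
      · rw [Int.even_iff] at hpq
        exact ⟨p + a', q + b', by omega, by omega, by rw [Int.odd_iff]; omega,
          by rw [hiter, hiter]⟩
    have hTne : { r : ℝ |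
        (∃ i j : ℕ, Odd ((i : ℤ) - j) ∧ r = dist (Ξ^[i] (x a')) (Ξ^[j] (x a'))) ∨
        (∃ k l : ℕ, Odd ((k : ℤ) - l) ∧ r = dist (Ξ^[k] (x b')) (Ξ^[l] (x b'))) ∨
        (∃ p q : ℕ, Even ((p : ℤ) - q) ∧ r = dist (Ξ^[p] (x a')) (Ξ^[q] (x b'))) }.Nonempty :=
      ⟨dist (Ξ^[0] (x a')) (Ξ^[1] (x a')), Or.inl ⟨0, 1, by rw [Int.odd_iff]; omega, rfl⟩⟩
    have hT := csSup_le_csSup (hSbdd n) hTne hsub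
    have := mul_le_mul_of_nonneg_left hT hη.1.le
    linarith
  have key : ∀ n a b : ℕ, 2 * n + 1 ≤ a → 2 * n + 1 ≤ b → Odd ((a : ℤ) - b) →
      dist (x a) (x b) ≤ η * M n + (1 - η) * D := by
    intro n a b ha hb hodd
    rw [Int.odd_iff] at hodd
    have hpar : (a % 2 = 1 ∧ b % 2 = 0) ∨ (a % 2 = 0 ∧ b % 2 = 1) := by omega
    rcases hpar with ⟨h1, h2⟩ | ⟨h1, h2⟩
    · exact aux n a b ha hb h1 h2
    · rw [dist_comm]; exact aux n b a hb ha h2 h1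
  have hMrec : ∀ n, M (n + 1) ≤ η * M n + (1 - η) * D := by
    intro n
    refine csSup_le (hSne (n + 1)) ?_
    rintro r ⟨a, b, ha, hb, hodd, rfl⟩
    exact key n a b (by omega) (by omega) hodd
  have hgeo : ∀ n, M n ≤ D + η ^ n * (M 0 - D) := by
    intro n
    induction n with
    | zero => simp
    | succ n ih =>
      have h2 : η * M n ≤ η * (D + η ^ n * (M 0 - D)) := mul_le_mul_of_nonneg_left ih hη.1.le
      calc M (n + 1) ≤ η * M n + (1 - η) * D := hMrec n
        _ ≤ η * (D + η ^ n * (M 0 - D)) + (1 - η) * D := by linarith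
        _ = D + η ^ (n + 1) * (M 0 - D) := by ring
  have hlow : ∀ n, D ≤ dist (x n) (x (n + 1)) := fun n =>
    hDle 0 _ ⟨n, n + 1, by omega, by omega, by rw [Int.odd_iff]; omega, rfl⟩
  have hup : ∀ n, dist (x n) (x (n + 1)) ≤ D + η ^ (n / 2) * (M 0 - D) := by
    intro n
    have hmem' : dist (x n) (x (n + 1)) ∈ S (n / 2) :=
      ⟨n, n + 1, by omega, by omega, by rw [Int.odd_iff]; omega, rfl⟩
    exact (le_csSup (hSbdd _) hmem').trans (hgeo _)
  have hdiv : Tendsto (fun n : ℕ => n / 2) atTop atTop :=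
    tendsto_atTop_atTop.2 fun b => ⟨2 * b, fun n hn => by omega⟩
  have hpow : Tendsto (fun n : ℕ => η ^ (n / 2)) atTop (nhds 0) :=
    (tendsto_pow_atTop_nhds_zero_of_lt_one hη.1.le hη.2).comp hdiv
  have hupper : Tendsto (fun n => D + η ^ (n / 2) * (M 0 - D)) atTop (nhds D) := by
    have h := Tendsto.const_add D (hpow.mul_const (M 0 - D))
    simpa using h
  exact tendsto_of_tendsto_of_tendsto_of_le_of_le tendsto_const_nhds hupper hlow hup
end

section
/- Let (X,d) be a metric space, Ω, Δ nonempty subsets of X, and Ξ : X → X a cyclic orbital contraction on Ω ∪ Δ with constant η ∈ (0,1). Fix ς₀ ∈ Ω, let ς₁ = Ξς₀, and define ς_{n+1} = Ξς_n for all n ≥ 0. Let S₀ = sup of the set {d(Ξ^i ς₀, Ξ^j ς₀) : i − j odd} ∪ {d(Ξ^k ς₁, Ξ^l ς₁) : k − l odd} ∪ {d(Ξ^p ς₀, Ξ^q ς₁) : p − q even}. Then for every n ≥ 1, d(ς_n, ς_{n+1}) ≤ η^n · S₀ + (1 − η^n) · dist(Ω,Δ). -/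
/-!
Along the orbit `ς_m = Ξ^[m] ς₀` the points alternate between `Ω` and `Δ`, so any two of them whose
indices differ by an odd number can be fed to the contraction inequality. Let `s n` be the supremum
of `d(ς_a, ς_b)` over `a, b ≥ n` with `a - b` odd. For such a pair at level `n + 1`, every distance
occurring in the contraction inequality for `(ς_{a-1}, ς_{b-1})` is again a distance between orbit
points of odd index gap and indices `≥ n`, whence `s (n + 1) ≤ η s n + (1 - η) dist(Ω, Δ)`.
Iterating gives the bound for `s n ≥ d(ς_n, ς_{n+1})`, and `s 0` is exactly `S₀`.
-/

lemma le_pow_mul_add_of_le_mul_add {u : ℕ → ℝ} {η D : ℝ} (hη : 0 ≤ η)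
    (hu : ∀ n, u (n + 1) ≤ η * u n + (1 - η) * D) (n : ℕ) :
    u n ≤ η ^ n * u 0 + (1 - η ^ n) * D := by
  induction n with
  | zero => simp
  | succ k ih =>
    calc u (k + 1) ≤ η * u k + (1 - η) * D := hu k
      _ ≤ η * (η ^ k * u 0 + (1 - η ^ k) * D) + (1 - η) * D := by gcongr
      _ = η ^ (k + 1) * u 0 + (1 - η ^ (k + 1)) * D := by ring

section CyclicOrbit

variable {X : Type*} {Ξ : X → X} {Ω Δ : Set X} {z : X}

lemma iterate_mem_of_even (hΩ : Set.MapsTo Ξ Ω Δ) (hΔ : Set.MapsTo Ξ Δ Ω) (hz : z ∈ Ω) {m : ℕ}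
    (hm : Even m) : Ξ^[m] z ∈ Ω := by
  obtain ⟨k, rfl⟩ := hm
  rw [← two_mul, Function.iterate_mul]
  exact (hΔ.comp hΩ).iterate k hz

lemma iterate_mem_of_odd (hΩ : Set.MapsTo Ξ Ω Δ) (hΔ : Set.MapsTo Ξ Δ Ω) (hz : z ∈ Ω) {m : ℕ}
    (hm : Odd m) : Ξ^[m] z ∈ Δ := by
  obtain ⟨k, rfl⟩ := hm
  exact (Function.iterate_succ_apply' Ξ (2 * k) z).symm ▸
    hΩ (iterate_mem_of_even hΩ hΔ hz ⟨k, two_mul k⟩)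

variable [MetricSpace X] (Ξ)

/-- The set whose supremum enters the orbital contraction inequality for `ς ∈ Ω`, `ϑ ∈ Δ`. -/
def orbitalGapSet (ς ϑ : X) : Set ℝ := { r : ℝ |
  (∃ i j : ℕ, Odd ((i : ℤ) - j) ∧ r = dist (Ξ^[i] ς) (Ξ^[j] ς)) ∨
  (∃ k l : ℕ, Odd ((k : ℤ) - l) ∧ r = dist (Ξ^[k] ϑ) (Ξ^[l] ϑ)) ∨
  (∃ p q : ℕ, Even ((p : ℤ) - q) ∧ r = dist (Ξ^[p] ς) (Ξ^[q] ϑ)) }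

def oddGapSet (z : X) (n : ℕ) : Set ℝ :=
  { r : ℝ | ∃ a b : ℕ, n ≤ a ∧ n ≤ b ∧ Odd ((a : ℤ) - b) ∧ r = dist (Ξ^[a] z) (Ξ^[b] z) }

variable {Ξ}

lemma orbitalGapSet_iterate_subset {a b n : ℕ} (hab : Odd ((a : ℤ) - b)) (ha : n ≤ a)
    (hb : n ≤ b) : orbitalGapSet Ξ (Ξ^[a] z) (Ξ^[b] z) ⊆ oddGapSet Ξ z n := by
  rw [Int.odd_iff] at hab
  rintro r (⟨i, j, hij, rfl⟩ | ⟨k, l, hkl, rfl⟩ | ⟨p, q, hpq, rfl⟩) <;>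
    simp only [← Function.iterate_add_apply]
  · rw [Int.odd_iff] at hij
    exact ⟨i + a, j + a, by omega, by omega, by rw [Int.odd_iff]; push_cast; omega, rfl⟩
  · rw [Int.odd_iff] at hkl
    exact ⟨k + b, l + b, by omega, by omega, by rw [Int.odd_iff]; push_cast; omega, rfl⟩
  · rw [Int.even_iff] at hpq
    exact ⟨p + a, q + b, by omega, by omega, by rw [Int.odd_iff]; push_cast; omega, rfl⟩

lemma oddGapSet_zero : oddGapSet Ξ z 0 = orbitalGapSet Ξ z (Ξ z) := by
  refine subset_antisymm ?_ ?_
  · rintro r ⟨a, b, -, -, hab, rfl⟩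
    exact Or.inl ⟨a, b, hab, rfl⟩
  · simpa using orbitalGapSet_iterate_subset (Ξ := Ξ) (z := z) (a := 0) (b := 1) (n := 0)
      ⟨-1, by norm_num⟩ le_rfl zero_le_one

lemma dist_iterate_succ_mem_oddGapSet (n : ℕ) :
    dist (Ξ^[n] z) (Ξ^[n + 1] z) ∈ oddGapSet Ξ z n :=
  ⟨n, n + 1, le_rfl, n.le_succ, ⟨-1, by push_cast; ring⟩, rfl⟩

lemma bddAbove_oddGapSet (h : Bornology.IsBounded (Set.range fun n => Ξ^[n] z)) (n : ℕ) :
    BddAbove (oddGapSet Ξ z n) := by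
  obtain ⟨C, hC⟩ := Metric.isBounded_iff.mp h
  exact ⟨C, by rintro r ⟨a, b, -, -, -, rfl⟩; exact hC ⟨a, rfl⟩ ⟨b, rfl⟩⟩

variable {η c : ℝ}

section Contraction

variable (hcycΩ : Set.MapsTo Ξ Ω Δ) (hcycΔ : Set.MapsTo Ξ Δ Ω)
  (hbdd : Bornology.IsBounded (Set.range fun n => Ξ^[n] z)) (hη : 0 ≤ η)
  (hcontr : ∀ ς ∈ Ω, ∀ ϑ ∈ Δ, dist (Ξ ς) (Ξ ϑ) ≤ η * sSup (orbitalGapSet Ξ ς ϑ) + c)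
  (hz : z ∈ Ω)
include hcycΩ hcycΔ hbdd hη hcontr hz

lemma dist_iterate_succ_le_of_even {a b n : ℕ} (ha : Even a) (hab : Odd ((a : ℤ) - b))
    (hna : n ≤ a) (hnb : n ≤ b) :
    dist (Ξ^[a + 1] z) (Ξ^[b + 1] z) ≤ η * sSup (oddGapSet Ξ z n) + c := by
  have hb : Odd b := by
    rw [Nat.odd_iff]; rw [Nat.even_iff] at ha; rw [Int.odd_iff] at hab; omega
  rw [Function.iterate_succ_apply', Function.iterate_succ_apply']
  refine (hcontr _ (iterate_mem_of_even hcycΩ hcycΔ hz ha) _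
    (iterate_mem_of_odd hcycΩ hcycΔ hz hb)).trans ?_
  gcongr η * ?_ + c
  exact csSup_le_csSup (bddAbove_oddGapSet hbdd n) ⟨_, Or.inl ⟨1, 0, ⟨0, by norm_num⟩, rfl⟩⟩
    (orbitalGapSet_iterate_subset hab hna hnb)

lemma sSup_oddGapSet_succ_le (n : ℕ) :
    sSup (oddGapSet Ξ z (n + 1)) ≤ η * sSup (oddGapSet Ξ z n) + c := by
  refine csSup_le ⟨_, dist_iterate_succ_mem_oddGapSet (n + 1)⟩ ?_
  rintro r ⟨_ | a, _ | b, ha, hb, hab, rfl⟩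
  · omega
  · omega
  · omega
  push_cast at hab
  rcases Nat.even_or_odd a with ha' | ha'
  · exact dist_iterate_succ_le_of_even hcycΩ hcycΔ hbdd hη hcontr hz ha'
      (by simpa using hab) (by omega) (by omega)
  · rw [dist_comm]
    refine dist_iterate_succ_le_of_even hcycΩ hcycΔ hbdd hη hcontr hz ?_ ?_ (by omega) (by omega)
    · rw [Nat.even_iff]; rw [Nat.odd_iff] at ha'; rw [Int.odd_iff] at hab; omega
    · rw [Int.odd_iff] at hab ⊢; omega

end Contraction

end CyclicOrbit

theorem stmt1_general {X : Type*} [MetricSpace X] (Ω Δ : Set X)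
    (Ξ : X → X) (η : ℝ) (hη : η ∈ Set.Ioo (0 : ℝ) 1)
    (hcycΩ : Set.MapsTo Ξ Ω Δ) (hcycΔ : Set.MapsTo Ξ Δ Ω)
    (hbdd : ∀ x : X, Bornology.IsBounded (Set.range fun n => Ξ^[n] x))
    (hcontr : ∀ ς ∈ Ω, ∀ ϑ ∈ Δ,
      dist (Ξ ς) (Ξ ϑ) ≤ η * sSup { r : ℝ |
      (∃ i j : ℕ, Odd ((i : ℤ) - j) ∧ r = dist (Ξ^[i] ς) (Ξ^[j] ς)) ∨
      (∃ k l : ℕ, Odd ((k : ℤ) - l) ∧ r = dist (Ξ^[k] ϑ) (Ξ^[l] ϑ)) ∨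
      (∃ p q : ℕ, Even ((p : ℤ) - q) ∧ r = dist (Ξ^[p] ς) (Ξ^[q] ϑ)) }
        + (1 - η) * sInf (Set.image2 dist Ω Δ))
    (ς₀ : X) (hς₀ : ς₀ ∈ Ω) :
    ∀ n : ℕ, 1 ≤ n →
      dist (Ξ^[n] ς₀) (Ξ^[n + 1] ς₀) ≤
        η ^ n * sSup { r : ℝ |
      (∃ i j : ℕ, Odd ((i : ℤ) - j) ∧ r = dist (Ξ^[i] ς₀) (Ξ^[j] ς₀)) ∨
      (∃ k l : ℕ, Odd ((k : ℤ) - l) ∧ r = dist (Ξ^[k] (Ξ ς₀)) (Ξ^[l] (Ξ ς₀))) ∨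
      (∃ p q : ℕ, Even ((p : ℤ) - q) ∧ r = dist (Ξ^[p] ς₀) (Ξ^[q] (Ξ ς₀))) }
          + (1 - η ^ n) * sInf (Set.image2 dist Ω Δ) := by
  intro n _
  have hstep := sSup_oddGapSet_succ_le hcycΩ hcycΔ (hbdd ς₀) hη.1.le hcontr hς₀
  calc dist (Ξ^[n] ς₀) (Ξ^[n + 1] ς₀) ≤ sSup (oddGapSet Ξ ς₀ n) :=
        le_csSup (bddAbove_oddGapSet (hbdd ς₀) n) (dist_iterate_succ_mem_oddGapSet n)
    _ ≤ η ^ n * sSup (oddGapSet Ξ ς₀ 0) + (1 - η ^ n) * sInf (Set.image2 dist Ω Δ) :=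
        le_pow_mul_add_of_le_mul_add (u := fun n => sSup (oddGapSet Ξ ς₀ n)) hη.1.le hstep n
    _ = η ^ n * sSup (orbitalGapSet Ξ ς₀ (Ξ ς₀)) + (1 - η ^ n) * sInf (Set.image2 dist Ω Δ) := by
        rw [oddGapSet_zero]

theorem stmt1 {X : Type*} [MetricSpace X] (Ω Δ : Set X)
    (hΩ : Ω.Nonempty) (hΔ : Δ.Nonempty) (Ξ : X → X) (η : ℝ) (hη : η ∈ Set.Ioo (0 : ℝ) 1)
    (hcycΩ : Set.MapsTo Ξ Ω Δ) (hcycΔ : Set.MapsTo Ξ Δ Ω)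
    (hbdd : ∀ x : X, Bornology.IsBounded (Set.range fun n => Ξ^[n] x))
    (hcontr : ∀ ς ∈ Ω, ∀ ϑ ∈ Δ,
      dist (Ξ ς) (Ξ ϑ) ≤ η * sSup { r : ℝ |
      (∃ i j : ℕ, Odd ((i : ℤ) - j) ∧ r = dist (Ξ^[i] ς) (Ξ^[j] ς)) ∨
      (∃ k l : ℕ, Odd ((k : ℤ) - l) ∧ r = dist (Ξ^[k] ϑ) (Ξ^[l] ϑ)) ∨
      (∃ p q : ℕ, Even ((p : ℤ) - q) ∧ r = dist (Ξ^[p] ς) (Ξ^[q] ϑ)) }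
        + (1 - η) * sInf (Set.image2 dist Ω Δ))
    (ς₀ : X) (hς₀ : ς₀ ∈ Ω) :
    ∀ n : ℕ, 1 ≤ n →
      dist (Ξ^[n] ς₀) (Ξ^[n + 1] ς₀) ≤
        η ^ n * sSup { r : ℝ |
      (∃ i j : ℕ, Odd ((i : ℤ) - j) ∧ r = dist (Ξ^[i] ς₀) (Ξ^[j] ς₀)) ∨
      (∃ k l : ℕ, Odd ((k : ℤ) - l) ∧ r = dist (Ξ^[k] (Ξ ς₀)) (Ξ^[l] (Ξ ς₀))) ∨
      (∃ p q : ℕ, Even ((p : ℤ) - q) ∧ r = dist (Ξ^[p] ς₀) (Ξ^[q] (Ξ ς₀))) }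
          + (1 - η ^ n) * sInf (Set.image2 dist Ω Δ) :=
  stmt1_general Ω Δ Ξ η hη hcycΩ hcycΔ hbdd hcontr ς₀ hς₀
end

section
/- Let (X,d) be a metric space, Ω, Δ nonempty subsets of X, and Ξ : X → X a cyclic orbital contraction on Ω ∪ Δ with constant η ∈ (0,1). Fix ς₀ ∈ Ω and let ς₁ = Ξς₀. Then for all nonnegative integers a, b with a − b odd, d(Ξ^a ς₁, Ξ^b ς₁) ≤ η · sup{d(Ξ^i ς₀, Ξ^j ς₀) : i − j odd} + (1 − η) · dist(Ω,Δ). -/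
/-! Write `ς_n = Ξ^[n] ς₀`. Since `Ξ` is cyclic, `ς_a ∈ Ω` and `ς_b ∈ Δ` whenever `a` is even and
`b` is odd, so the contraction inequality applies to the pair `(ς_a, ς_b)`. Each distance in its
supremum is between two points of the orbit of `ς₀` whose indices differ by an odd number, so the
supremum is at most the supremum over odd index gaps of that single orbit. -/

open Metric

theorem Set.MapsTo.iterate_mem_of_even {α : Type*} {f : α → α} {s t : Set α}
    (hst : Set.MapsTo f s t) (hts : Set.MapsTo f t s) {x : α} (hx : x ∈ s) {n : ℕ} (hn : Even n) :
    f^[n] x ∈ s := by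
  obtain ⟨k, rfl⟩ := hn
  rw [← two_mul, Function.iterate_mul]
  exact (hts.comp hst).iterate k hx

theorem Set.MapsTo.iterate_mem_of_odd {α : Type*} {f : α → α} {s t : Set α}
    (hst : Set.MapsTo f s t) (hts : Set.MapsTo f t s) {x : α} (hx : x ∈ s) {n : ℕ} (hn : Odd n) :
    f^[n] x ∈ t := by
  obtain ⟨k, rfl⟩ := hn
  exact hts.iterate_mem_of_even hst (hst hx) ⟨k, two_mul k⟩

section CyclicOrbitalContraction

variable {X : Type*} [MetricSpace X] {f : X → X}

/-- The distances from the supremum in the cyclic orbital contraction inequality at `(ς, ϑ)`. -/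
def orbitalDists (f : X → X) (ς ϑ : X) : Set ℝ :=
  { r : ℝ |
    (∃ i j : ℕ, Odd ((i : ℤ) - j) ∧ r = dist (f^[i] ς) (f^[j] ς)) ∨
    (∃ k l : ℕ, Odd ((k : ℤ) - l) ∧ r = dist (f^[k] ϑ) (f^[l] ϑ)) ∨
    (∃ p q : ℕ, Even ((p : ℤ) - q) ∧ r = dist (f^[p] ς) (f^[q] ϑ)) }

def oddGapDists (f : X → X) (x : X) : Set ℝ :=
  { r : ℝ | ∃ i j : ℕ, Odd ((i : ℤ) - j) ∧ r = dist (f^[i] x) (f^[j] x) }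

theorem bddAbove_oddGapDists {x : X} (hbdd : Bornology.IsBounded (Set.range fun n => f^[n] x)) :
    BddAbove (oddGapDists f x) := by
  obtain ⟨C, hC⟩ := isBounded_iff.1 hbdd
  refine ⟨C, ?_⟩
  rintro r ⟨i, j, -, rfl⟩
  exact hC ⟨i, rfl⟩ ⟨j, rfl⟩

theorem dist_mem_orbitalDists (ς ϑ : X) : dist ς ϑ ∈ orbitalDists f ς ϑ :=
  Or.inr (Or.inr ⟨0, 0, by simp, rfl⟩)

theorem orbitalDists_iterate_subset_oddGapDists (x : X) {m n : ℕ} (hmn : Odd ((m : ℤ) - n)) :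
    orbitalDists f (f^[m] x) (f^[n] x) ⊆ oddGapDists f x := by
  have shift (i j c : ℕ) : ((i + c : ℕ) : ℤ) - (j + c : ℕ) = (i : ℤ) - j := by push_cast; ring
  rintro r (⟨i, j, hij, rfl⟩ | ⟨i, j, hij, rfl⟩ | ⟨p, q, hpq, rfl⟩)
  · exact ⟨i + m, j + m, by rwa [shift], by simp only [Function.iterate_add_apply]⟩
  · exact ⟨i + n, j + n, by rwa [shift], by simp only [Function.iterate_add_apply]⟩
  · refine ⟨p + m, q + n, ?_, by simp only [Function.iterate_add_apply]⟩
    convert hpq.add_odd hmn using 1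
    push_cast; ring

theorem dist_apply_iterate_le_of_even_of_odd {s t : Set X} {η c : ℝ} (hη : 0 ≤ η)
    (hst : Set.MapsTo f s t) (hts : Set.MapsTo f t s)
    (hcontr : ∀ ς ∈ s, ∀ ϑ ∈ t, dist (f ς) (f ϑ) ≤ η * sSup (orbitalDists f ς ϑ) + c)
    {x : X} (hx : x ∈ s) (hbdd : Bornology.IsBounded (Set.range fun n => f^[n] x))
    {a b : ℕ} (ha : Even a) (hb : Odd b) :
    dist (f (f^[a] x)) (f (f^[b] x)) ≤ η * sSup (oddGapDists f x) + c := by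
  have hab : Odd ((a : ℤ) - b) := by
    rw [Int.odd_sub', Int.odd_coe_nat, Int.even_coe_nat]
    exact iff_of_true hb ha
  calc dist (f (f^[a] x)) (f (f^[b] x))
      ≤ η * sSup (orbitalDists f (f^[a] x) (f^[b] x)) + c :=
        hcontr _ (hst.iterate_mem_of_even hts hx ha) _ (hst.iterate_mem_of_odd hts hx hb)
    _ ≤ η * sSup (oddGapDists f x) + c := by
        gcongr η * ?_ + c
        exact csSup_le_csSup (bddAbove_oddGapDists hbdd) ⟨_, dist_mem_orbitalDists _ _⟩
          (orbitalDists_iterate_subset_oddGapDists x hab)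

end CyclicOrbitalContraction

theorem stmt2_general {X : Type*} [MetricSpace X] (Ω Δ : Set X)
    (Ξ : X → X) (η : ℝ) (hη : η ∈ Set.Ioo (0 : ℝ) 1)
    (hcycΩ : Set.MapsTo Ξ Ω Δ) (hcycΔ : Set.MapsTo Ξ Δ Ω)
    (hbdd : ∀ x : X, Bornology.IsBounded (Set.range fun n => Ξ^[n] x))
    (hcontr : ∀ ς ∈ Ω, ∀ ϑ ∈ Δ,
      dist (Ξ ς) (Ξ ϑ) ≤ η * sSup { r : ℝ |
      (∃ i j : ℕ, Odd ((i : ℤ) - j) ∧ r = dist (Ξ^[i] ς) (Ξ^[j] ς)) ∨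
      (∃ k l : ℕ, Odd ((k : ℤ) - l) ∧ r = dist (Ξ^[k] ϑ) (Ξ^[l] ϑ)) ∨
      (∃ p q : ℕ, Even ((p : ℤ) - q) ∧ r = dist (Ξ^[p] ς) (Ξ^[q] ϑ)) }
        + (1 - η) * sInf (Set.image2 dist Ω Δ))
    (ς₀ : X) (hς₀ : ς₀ ∈ Ω) :
    ∀ a b : ℕ, Odd ((a : ℤ) - b) →
      dist (Ξ^[a] (Ξ ς₀)) (Ξ^[b] (Ξ ς₀)) ≤
        η * sSup { r : ℝ | ∃ i j : ℕ, Odd ((i : ℤ) - j) ∧ r = dist (Ξ^[i] ς₀) (Ξ^[j] ς₀) }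
          + (1 - η) * sInf (Set.image2 dist Ω Δ) := by
  intro a b hab
  have key {a b : ℕ} (ha : Even a) (hb : Odd b) :=
    dist_apply_iterate_le_of_even_of_odd hη.1.le hcycΩ hcycΔ hcontr hς₀ (hbdd ς₀) ha hb
  rw [← (Function.Commute.self_iterate Ξ a).eq, ← (Function.Commute.self_iterate Ξ b).eq]
  rcases Nat.even_or_odd a with ha | ha
  · rw [Int.odd_sub', Int.odd_coe_nat, Int.even_coe_nat] at hab
    exact key ha (hab.2 ha)
  · rw [Int.odd_sub, Int.odd_coe_nat, Int.even_coe_nat] at hab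
    rw [dist_comm]
    exact key (hab.1 ha) ha

theorem stmt2 {X : Type*} [MetricSpace X] (Ω Δ : Set X)
    (hΩ : Ω.Nonempty) (hΔ : Δ.Nonempty) (Ξ : X → X) (η : ℝ) (hη : η ∈ Set.Ioo (0 : ℝ) 1)
    (hcycΩ : Set.MapsTo Ξ Ω Δ) (hcycΔ : Set.MapsTo Ξ Δ Ω)
    (hbdd : ∀ x : X, Bornology.IsBounded (Set.range fun n => Ξ^[n] x))
    (hcontr : ∀ ς ∈ Ω, ∀ ϑ ∈ Δ,
      dist (Ξ ς) (Ξ ϑ) ≤ η * sSup { r : ℝ |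
      (∃ i j : ℕ, Odd ((i : ℤ) - j) ∧ r = dist (Ξ^[i] ς) (Ξ^[j] ς)) ∨
      (∃ k l : ℕ, Odd ((k : ℤ) - l) ∧ r = dist (Ξ^[k] ϑ) (Ξ^[l] ϑ)) ∨
      (∃ p q : ℕ, Even ((p : ℤ) - q) ∧ r = dist (Ξ^[p] ς) (Ξ^[q] ϑ)) }
        + (1 - η) * sInf (Set.image2 dist Ω Δ))
    (ς₀ : X) (hς₀ : ς₀ ∈ Ω) :
    ∀ a b : ℕ, Odd ((a : ℤ) - b) →
      dist (Ξ^[a] (Ξ ς₀)) (Ξ^[b] (Ξ ς₀)) ≤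
        η * sSup { r : ℝ | ∃ i j : ℕ, Odd ((i : ℤ) - j) ∧ r = dist (Ξ^[i] ς₀) (Ξ^[j] ς₀) }
          + (1 - η) * sInf (Set.image2 dist Ω Δ) :=
  stmt2_general Ω Δ Ξ η hη hcycΩ hcycΔ hbdd hcontr ς₀ hς₀
end

section
/- Let X be a uniformly convex Banach space, Ω, Δ nonempty subsets of X, and Ξ : X → X a cyclic orbital contraction on Ω ∪ Δ with constant η ∈ (0,1). Fix ς₀ ∈ Ω and define ς_{n+1} = Ξς_n for all n ≥ 0. Then ‖ς_n − ς_{n+1}‖ → dist(Ω,Δ) as n → ∞. -/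
/-!
Along the orbit `xₙ = Ξⁿ ς₀`, points whose indices differ by an odd number lie in different sets,
so their distance is at least `d = dist(Ω, Δ)`. Let `Dₙ` be the supremum of these odd-gap distances
over indices `≥ n`. Applying the contraction to a pair `(x_a, x_b)` with `a, b ≥ n`, every distance in
the orbital supremum is again an odd-gap distance with indices `≥ n`, whence
`D_{n+2} ≤ η Dₙ + (1 - η) d`. So `Dₙ` decreases to a limit `L ≥ d` with `L ≤ η L + (1 - η) d`,
i.e. `L = d`, and `d ≤ ‖xₙ - xₙ₊₁‖ ≤ Dₙ`.
-/

open Filter Metric Function Set Topology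

lemma odd_natCast_sub_succ (n : ℕ) : Odd ((n : ℤ) - (n + 1 : ℕ)) :=
  ⟨-1, by push_cast; ring⟩

lemma even_and_odd_or_odd_and_even_of_odd_sub {a b : ℕ} (h : Odd ((a : ℤ) - b)) :
    Even a ∧ Odd b ∨ Odd a ∧ Even b := by
  rw [Int.odd_sub] at h
  grind

lemma tendsto_of_antitone_of_le_mul_add {u : ℕ → ℝ} {d η : ℝ} {k : ℕ} (hu : Antitone u)
    (hd : ∀ n, d ≤ u n) (hη : η < 1) (hk : ∀ n, u (n + k) ≤ η * u n + (1 - η) * d) :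
    Tendsto u atTop (𝓝 d) := by
  have hL := tendsto_atTop_ciInf hu ⟨d, by rintro _ ⟨n, rfl⟩; exact hd n⟩
  set L := ⨅ n, u n
  have hdL : d ≤ L := le_ciInf hd
  have hLd : L ≤ η * L + (1 - η) * d :=
    le_of_tendsto_of_tendsto' ((tendsto_add_atTop_iff_nat k).2 hL) ((hL.const_mul η).add_const _) hk
  have hLeq : L = d := by nlinarith
  rwa [hLeq] at hL

section Cyclic

variable {α : Type*} {Ξ : α → α} {Ω Δ : Set α} {z : α} {n : ℕ}

lemma iterate_mem_of_even_s3 (hΩΔ : MapsTo Ξ Ω Δ) (hΔΩ : MapsTo Ξ Δ Ω) (hz : z ∈ Ω) (hn : Even n) :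
    Ξ^[n] z ∈ Ω := by
  obtain ⟨k, rfl⟩ := hn
  rw [← two_mul, iterate_mul]
  exact (hΔΩ.comp hΩΔ).iterate k hz

lemma iterate_mem_of_odd_s3 (hΩΔ : MapsTo Ξ Ω Δ) (hΔΩ : MapsTo Ξ Δ Ω) (hz : z ∈ Ω) (hn : Odd n) :
    Ξ^[n] z ∈ Δ := by
  obtain ⟨k, rfl⟩ := hn
  rw [add_comm, iterate_add_apply, iterate_one]
  exact hΩΔ (iterate_mem_of_even_s3 hΩΔ hΔΩ hz (even_two_mul k))

end Cyclic

section Seminormed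

variable {E : Type*} [SeminormedAddCommGroup E]

noncomputable def setDist (Ω Δ : Set E) : ℝ := sInf (image2 (fun x y => ‖x - y‖) Ω Δ)

/-- The supremum in the definition of a cyclic orbital contraction. -/
noncomputable def cyclicOrbitDiam (Ξ : E → E) (ς ϑ : E) : ℝ := sSup { r : ℝ |
  (∃ i j : ℕ, Odd ((i : ℤ) - j) ∧ r = ‖Ξ^[i] ς - Ξ^[j] ς‖) ∨
  (∃ k l : ℕ, Odd ((k : ℤ) - l) ∧ r = ‖Ξ^[k] ϑ - Ξ^[l] ϑ‖) ∨
  (∃ p q : ℕ, Even ((p : ℤ) - q) ∧ r = ‖Ξ^[p] ς - Ξ^[q] ϑ‖) }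

noncomputable def oddGapSup (x : ℕ → E) (n : ℕ) : ℝ :=
  sSup {r | ∃ a b : ℕ, n ≤ a ∧ n ≤ b ∧ Odd ((a : ℤ) - b) ∧ r = ‖x a - x b‖}

lemma setDist_le_norm_sub {Ω Δ : Set E} {x y : E} (hx : x ∈ Ω) (hy : y ∈ Δ) :
    setDist Ω Δ ≤ ‖x - y‖ :=
  csInf_le ⟨0, by rintro _ ⟨_, -, _, -, rfl⟩; positivity⟩ (mem_image2_of_mem hx hy)

section OddGap

variable {x : ℕ → E} {n : ℕ}

lemma norm_sub_le_oddGapSup (hx : Bornology.IsBounded (range x)) {a b : ℕ} (ha : n ≤ a)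
    (hb : n ≤ b) (hab : Odd ((a : ℤ) - b)) : ‖x a - x b‖ ≤ oddGapSup x n := by
  obtain ⟨C, hC⟩ := isBounded_iff.1 hx
  refine le_csSup ⟨C, ?_⟩ ⟨a, b, ha, hb, hab, rfl⟩
  rintro _ ⟨a, b, -, -, -, rfl⟩
  simpa [dist_eq_norm] using hC (mem_range_self a) (mem_range_self b)

lemma oddGapSup_le {c : ℝ}
    (h : ∀ a b, n ≤ a → n ≤ b → Odd ((a : ℤ) - b) → ‖x a - x b‖ ≤ c) : oddGapSup x n ≤ c :=
  csSup_le ⟨_, n, n + 1, le_rfl, n.le_succ, odd_natCast_sub_succ n, rfl⟩ <| by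
    rintro _ ⟨a, b, ha, hb, hab, rfl⟩
    exact h a b ha hb hab

lemma antitone_oddGapSup (hx : Bornology.IsBounded (range x)) : Antitone (oddGapSup x) :=
  antitone_nat_of_succ_le fun n => oddGapSup_le fun _ _ ha hb hab =>
    norm_sub_le_oddGapSup hx (n.le_succ.trans ha) (n.le_succ.trans hb) hab

end OddGap

section Orbit

variable {Ξ : E → E} {z : E} {n a b : ℕ}

lemma cyclicOrbitDiam_iterate_le (hz : Bornology.IsBounded (range fun k => Ξ^[k] z))
    (ha : n ≤ a) (hb : n ≤ b) (hab : Odd ((a : ℤ) - b)) :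
    cyclicOrbitDiam Ξ (Ξ^[a] z) (Ξ^[b] z) ≤ oddGapSup (fun k => Ξ^[k] z) n := by
  refine csSup_le ⟨_, Or.inl ⟨1, 0, by norm_num, rfl⟩⟩ ?_
  rintro _ (⟨i, j, hij, rfl⟩ | ⟨k, l, hkl, rfl⟩ | ⟨p, q, hpq, rfl⟩) <;>
    simp only [← iterate_add_apply] <;>
    refine norm_sub_le_oddGapSup hz (by omega) (by omega) ?_
  · convert hij using 1; push_cast; ring
  · convert hkl using 1; push_cast; ring
  · convert hpq.add_odd hab using 1; push_cast; ring

variable {Ω Δ : Set E} {η : ℝ}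

lemma setDist_le_norm_iterate_sub (hΩΔ : MapsTo Ξ Ω Δ) (hΔΩ : MapsTo Ξ Δ Ω) (hz : z ∈ Ω)
    (hab : Odd ((a : ℤ) - b)) : setDist Ω Δ ≤ ‖Ξ^[a] z - Ξ^[b] z‖ := by
  rcases even_and_odd_or_odd_and_even_of_odd_sub hab with ⟨ha, hb⟩ | ⟨ha, hb⟩
  · exact setDist_le_norm_sub (iterate_mem_of_even_s3 hΩΔ hΔΩ hz ha) (iterate_mem_of_odd_s3 hΩΔ hΔΩ hz hb)
  · rw [norm_sub_rev]
    exact setDist_le_norm_sub (iterate_mem_of_even_s3 hΩΔ hΔΩ hz hb) (iterate_mem_of_odd_s3 hΩΔ hΔΩ hz ha)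

lemma norm_iterate_succ_sub_le_of_even_of_odd (hΩΔ : MapsTo Ξ Ω Δ) (hΔΩ : MapsTo Ξ Δ Ω)
    (hcontr : ∀ ς ∈ Ω, ∀ ϑ ∈ Δ,
      ‖Ξ ς - Ξ ϑ‖ ≤ η * cyclicOrbitDiam Ξ ς ϑ + (1 - η) * setDist Ω Δ)
    (hη : 0 ≤ η) (hz : z ∈ Ω) (hbdd : Bornology.IsBounded (range fun k => Ξ^[k] z))
    (ha : n ≤ a) (hb : n ≤ b) (ha_even : Even a) (hb_odd : Odd b) :
    ‖Ξ^[a + 1] z - Ξ^[b + 1] z‖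
      ≤ η * oddGapSup (fun k => Ξ^[k] z) n + (1 - η) * setDist Ω Δ :=
  calc ‖Ξ^[a + 1] z - Ξ^[b + 1] z‖ = ‖Ξ (Ξ^[a] z) - Ξ (Ξ^[b] z)‖ := by
        simp only [iterate_succ_apply']
    _ ≤ η * cyclicOrbitDiam Ξ (Ξ^[a] z) (Ξ^[b] z) + (1 - η) * setDist Ω Δ :=
        hcontr _ (iterate_mem_of_even_s3 hΩΔ hΔΩ hz ha_even) _ (iterate_mem_of_odd_s3 hΩΔ hΔΩ hz hb_odd)
    _ ≤ η * oddGapSup (fun k => Ξ^[k] z) n + (1 - η) * setDist Ω Δ := by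
        gcongr
        exact cyclicOrbitDiam_iterate_le hbdd ha hb (ha_even.natCast.sub_odd hb_odd.natCast)

lemma oddGapSup_add_two_le (hΩΔ : MapsTo Ξ Ω Δ) (hΔΩ : MapsTo Ξ Δ Ω)
    (hcontr : ∀ ς ∈ Ω, ∀ ϑ ∈ Δ,
      ‖Ξ ς - Ξ ϑ‖ ≤ η * cyclicOrbitDiam Ξ ς ϑ + (1 - η) * setDist Ω Δ)
    (hη : 0 ≤ η) (hz : z ∈ Ω) (hbdd : Bornology.IsBounded (range fun k => Ξ^[k] z)) (n : ℕ) :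
    oddGapSup (fun k => Ξ^[k] z) (n + 2)
      ≤ η * oddGapSup (fun k => Ξ^[k] z) n + (1 - η) * setDist Ω Δ := by
  refine oddGapSup_le fun a b ha hb hab => ?_
  obtain ⟨a, rfl⟩ : ∃ a', a = a' + 1 := ⟨a - 1, by omega⟩
  obtain ⟨b, rfl⟩ : ∃ b', b = b' + 1 := ⟨b - 1, by omega⟩
  have hab' : Odd ((a : ℤ) - b) := by convert hab using 1; push_cast; ring
  rcases even_and_odd_or_odd_and_even_of_odd_sub hab' with ⟨ha', hb'⟩ | ⟨ha', hb'⟩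
  · exact norm_iterate_succ_sub_le_of_even_of_odd hΩΔ hΔΩ hcontr hη hz hbdd (by omega) (by omega)
      ha' hb'
  · rw [norm_sub_rev]
    exact norm_iterate_succ_sub_le_of_even_of_odd hΩΔ hΔΩ hcontr hη hz hbdd (by omega) (by omega)
      hb' ha'

end Orbit

end Seminormed

theorem stmt3_general {X : Type*} [NormedAddCommGroup X] (Ω Δ : Set X)
    (Ξ : X → X) (η : ℝ) (hη : η ∈ Set.Ioo (0 : ℝ) 1)
    (hcycΩ : Set.MapsTo Ξ Ω Δ) (hcycΔ : Set.MapsTo Ξ Δ Ω)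
    (hbdd : ∀ x : X, Bornology.IsBounded (Set.range fun n => Ξ^[n] x))
    (hcontr : ∀ ς ∈ Ω, ∀ ϑ ∈ Δ,
      ‖Ξ ς - Ξ ϑ‖ ≤ η * sSup { r : ℝ |
      (∃ i j : ℕ, Odd ((i : ℤ) - j) ∧ r = ‖Ξ^[i] ς - Ξ^[j] ς‖) ∨
      (∃ k l : ℕ, Odd ((k : ℤ) - l) ∧ r = ‖Ξ^[k] ϑ - Ξ^[l] ϑ‖) ∨
      (∃ p q : ℕ, Even ((p : ℤ) - q) ∧ r = ‖Ξ^[p] ς - Ξ^[q] ϑ‖) }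
        + (1 - η) * sInf (Set.image2 (fun x y => ‖x - y‖) Ω Δ))
    (ς₀ : X) (hς₀ : ς₀ ∈ Ω) :
    Tendsto (fun n => ‖Ξ^[n] ς₀ - Ξ^[n + 1] ς₀‖) atTop (nhds (sInf (Set.image2 (fun x y => ‖x - y‖) Ω Δ))) := by
  obtain ⟨hη0, hη1⟩ := hη
  have hlower n := setDist_le_norm_iterate_sub hcycΩ hcycΔ hς₀ (odd_natCast_sub_succ n)
  have hupper n := norm_sub_le_oddGapSup (hbdd ς₀) le_rfl n.le_succ (odd_natCast_sub_succ n)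
  have hgap : Tendsto (oddGapSup (fun k => Ξ^[k] ς₀)) atTop (𝓝 (setDist Ω Δ)) :=
    tendsto_of_antitone_of_le_mul_add (antitone_oddGapSup (hbdd ς₀))
      (fun n => (hlower n).trans (hupper n)) hη1
      (oddGapSup_add_two_le hcycΩ hcycΔ hcontr hη0.le hς₀ (hbdd ς₀))
  exact tendsto_of_tendsto_of_tendsto_of_le_of_le tendsto_const_nhds hgap hlower hupper

theorem stmt3 {X : Type*} [NormedAddCommGroup X] [NormedSpace ℝ X] [UniformConvexSpace X]
    [CompleteSpace X] (Ω Δ : Set X) (hΩ : Ω.Nonempty) (hΔ : Δ.Nonempty)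
    (Ξ : X → X) (η : ℝ) (hη : η ∈ Set.Ioo (0 : ℝ) 1)
    (hcycΩ : Set.MapsTo Ξ Ω Δ) (hcycΔ : Set.MapsTo Ξ Δ Ω)
    (hbdd : ∀ x : X, Bornology.IsBounded (Set.range fun n => Ξ^[n] x))
    (hcontr : ∀ ς ∈ Ω, ∀ ϑ ∈ Δ,
      ‖Ξ ς - Ξ ϑ‖ ≤ η * sSup { r : ℝ |
      (∃ i j : ℕ, Odd ((i : ℤ) - j) ∧ r = ‖Ξ^[i] ς - Ξ^[j] ς‖) ∨
      (∃ k l : ℕ, Odd ((k : ℤ) - l) ∧ r = ‖Ξ^[k] ϑ - Ξ^[l] ϑ‖) ∨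
      (∃ p q : ℕ, Even ((p : ℤ) - q) ∧ r = ‖Ξ^[p] ς - Ξ^[q] ϑ‖) }
        + (1 - η) * sInf (Set.image2 (fun x y => ‖x - y‖) Ω Δ))
    (ς₀ : X) (hς₀ : ς₀ ∈ Ω) :
    Tendsto (fun n => ‖Ξ^[n] ς₀ - Ξ^[n + 1] ς₀‖) atTop (nhds (sInf (Set.image2 (fun x y => ‖x - y‖) Ω Δ))) :=
  stmt3_general Ω Δ Ξ η hη hcycΩ hcycΔ hbdd hcontr ς₀ hς₀
end

section
/- Let X be a uniformly convex Banach space, Ω, Δ nonempty, closed and convex subsets of X, and Ξ : X → X a cyclic orbital contraction on Ω ∪ Δ with constant η ∈ (0,1). Then there exists ς* ∈ Ω, a best proximity point of Ξ, such that for every ς ∈ Ω the sequence {Ξ^{2n}ς} converges to ς* in norm. -/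
open Filter Metric

/-- Quantitative uniform-convexity lemma à la Eldred–Veeramani. -/
lemma ucq6 {X : Type*} [NormedAddCommGroup X] [NormedSpace ℝ X] [UniformConvexSpace X]
    {A : Set X} (hA : Convex ℝ A) {d : ℝ} (hd : 0 ≤ d) {ε : ℝ} (hε : 0 < ε) :
    ∃ δ > 0, ∀ a ∈ A, ∀ c ∈ A, ∀ b : X, (∀ p ∈ A, d ≤ ‖p - b‖) →
      ‖a - b‖ ≤ d + δ → ‖c - b‖ ≤ d + δ → ‖a - c‖ ≤ ε := by
  rcases eq_or_lt_of_le hd with hd0 | hdpos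
  · refine ⟨ε / 2, by positivity, fun a ha c hc b hb h1 h2 => ?_⟩
    have : a - c = (a - b) - (c - b) := by abel
    rw [this]
    calc ‖(a - b) - (c - b)‖ ≤ ‖a - b‖ + ‖c - b‖ := norm_sub_le _ _
    _ ≤ (d + ε/2) + (d + ε/2) := add_le_add h1 h2
    _ = ε := by rw [← hd0]; ring
  · obtain ⟨δ₁, hδ₁pos, hδ₁⟩ := exists_forall_closed_ball_dist_add_le_two_sub X
      (show (0:ℝ) < ε / (d+1) by positivity)
    set δ₂ : ℝ := min δ₁ 1 with hδ₂def
    have hδ₂pos : 0 < δ₂ := lt_min hδ₁pos one_pos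
    have hδ₂le : δ₂ ≤ 1 := min_le_right _ _
    refine ⟨min 1 (d * δ₂ / 4), by positivity, fun a ha c hc b hb h1 h2 => ?_⟩
    set δ : ℝ := min 1 (d * δ₂ / 4) with hδdef
    have hδpos : 0 < δ := by positivity
    have hδ1 : δ ≤ 1 := min_le_left _ _
    have hδ2 : δ ≤ d * δ₂ / 4 := min_le_right _ _
    by_contra hcon
    push_neg at hcon
    set R : ℝ := d + δ with hRdef
    have hRpos : 0 < R := by positivity
    set u : X := R⁻¹ • (a - b) with hu
    set v : X := R⁻¹ • (c - b) with hv
    have hnorm : ∀ w : X, ‖R⁻¹ • w‖ = ‖w‖ / R := fun w => by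
      rw [norm_smul, Real.norm_eq_abs, abs_inv, abs_of_pos hRpos, inv_mul_eq_div, div_eq_inv_mul]
    have hun : ‖u‖ ≤ 1 := by rw [hu, hnorm]; exact div_le_one_of_le₀ h1 hRpos.le
    have hvn : ‖v‖ ≤ 1 := by rw [hv, hnorm]; exact div_le_one_of_le₀ h2 hRpos.le
    have huv : ε / (d+1) ≤ ‖u - v‖ := by
      have : u - v = R⁻¹ • (a - c) := by rw [hu, hv, ← smul_sub]; congr 1; abel
      rw [this, hnorm]
      have hRle : R ≤ d + 1 := by rw [hRdef]; linarith
      have s1 : ε / (d+1) ≤ ε / R := div_le_div_of_nonneg_left hε.le hRpos hRle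
      have s2 : ε / R ≤ ‖a - c‖ / R := by gcongr
      exact s1.trans s2
    have hsum : ‖u + v‖ ≤ 2 - δ₂ := by
      have := hδ₁ hun hvn huv
      have h2' : (2:ℝ) - δ₁ ≤ 2 - δ₂ := by linarith [min_le_left δ₁ (1:ℝ)]
      exact this.trans h2'
    have hmid : (1/2 : ℝ) • a + (1/2 : ℝ) • c ∈ A :=
      hA ha hc (by norm_num) (by norm_num) (by norm_num)
    have hml := hb _ hmid
    have heq : (1/2 : ℝ) • a + (1/2 : ℝ) • c - b = (R/2) • (u + v) := by
      rw [hu, hv, smul_add, smul_smul, smul_smul]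
      have : R / 2 * R⁻¹ = 1/2 := by field_simp
      rw [this, smul_sub, smul_sub]
      module
    have : d ≤ R/2 * (2 - δ₂) := by
      calc d ≤ ‖(1/2 : ℝ) • a + (1/2 : ℝ) • c - b‖ := hml
      _ = ‖(R/2) • (u+v)‖ := by rw [heq]
      _ = R/2 * ‖u+v‖ := by rw [norm_smul, Real.norm_eq_abs, abs_of_pos (by positivity)]
      _ ≤ R/2 * (2 - δ₂) := by
          apply mul_le_mul_of_nonneg_left hsum (by positivity)
    nlinarith [hdpos, hδ₂pos, hδ2, this]

/-- The family of "tail" orbital sets. -/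
def TT6 {X : Type*} [NormedAddCommGroup X] (Ξ : X → X) (x y : X) (n : ℕ) : Set ℝ :=
  { r : ℝ |
    (∃ i j : ℕ, n ≤ i ∧ n ≤ j ∧ Odd ((i : ℤ) - j) ∧ r = ‖Ξ^[i] x - Ξ^[j] x‖) ∨
    (∃ k l : ℕ, n ≤ k ∧ n ≤ l ∧ Odd ((k : ℤ) - l) ∧ r = ‖Ξ^[k] y - Ξ^[l] y‖) ∨
    (∃ p q : ℕ, n ≤ p ∧ n ≤ q ∧ Even ((p : ℤ) - q) ∧ r = ‖Ξ^[p] x - Ξ^[q] y‖) }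

lemma oddZ {i j : ℕ} (h : i % 2 ≠ j % 2) : Odd ((i:ℤ) - j) := by
  simp only [Int.odd_iff]; omega

lemma evenZ {i j : ℕ} (h : i % 2 = j % 2) : Even ((i:ℤ) - j) := by
  simp only [Int.even_iff]; omega

lemma oddZ' {i j : ℕ} (h : Odd ((i:ℤ) - j)) : i % 2 ≠ j % 2 := by
  simp only [Int.odd_iff] at h; omega

lemma evenZ' {i j : ℕ} (h : Even ((i:ℤ) - j)) : i % 2 = j % 2 := by
  simp only [Int.even_iff] at h; omega

section TTlemmas
variable {X : Type*} [NormedAddCommGroup X] {Ξ : X → X} {x y : X} {n : ℕ}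

lemma mem_TT6_x {i j : ℕ} (hi : n ≤ i) (hj : n ≤ j) (h : Odd ((i:ℤ) - j)) {r : ℝ}
    (hr : r = ‖Ξ^[i] x - Ξ^[j] x‖) : r ∈ TT6 Ξ x y n := Or.inl ⟨i, j, hi, hj, h, hr⟩

lemma mem_TT6_y {k l : ℕ} (hk : n ≤ k) (hl : n ≤ l) (h : Odd ((k:ℤ) - l)) {r : ℝ}
    (hr : r = ‖Ξ^[k] y - Ξ^[l] y‖) : r ∈ TT6 Ξ x y n := Or.inr (Or.inl ⟨k, l, hk, hl, h, hr⟩)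

lemma mem_TT6_xy {p q : ℕ} (hp : n ≤ p) (hq : n ≤ q) (h : Even ((p:ℤ) - q)) {r : ℝ}
    (hr : r = ‖Ξ^[p] x - Ξ^[q] y‖) : r ∈ TT6 Ξ x y n := Or.inr (Or.inr ⟨p, q, hp, hq, h, hr⟩)

lemma bddAbove_TT6 (hx : Bornology.IsBounded (Set.range fun m => Ξ^[m] x))
    (hy : Bornology.IsBounded (Set.range fun m => Ξ^[m] y)) :
    BddAbove (TT6 Ξ x y n) := by
  obtain ⟨Cx, hCx⟩ := hx.exists_norm_le
  obtain ⟨Cy, hCy⟩ := hy.exists_norm_le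
  have hx' : ∀ k, ‖Ξ^[k] x‖ ≤ Cx := fun k => hCx _ ⟨k, rfl⟩
  have hy' : ∀ k, ‖Ξ^[k] y‖ ≤ Cy := fun k => hCy _ ⟨k, rfl⟩
  have hCx0 : 0 ≤ Cx := le_trans (norm_nonneg _) (hx' 0)
  have hCy0 : 0 ≤ Cy := le_trans (norm_nonneg _) (hy' 0)
  refine ⟨Cx + Cy + (Cx + Cy), ?_⟩
  rintro r (⟨i, j, _, _, _, rfl⟩ | ⟨k, l, _, _, _, rfl⟩ | ⟨p, q, _, _, _, rfl⟩)
  · have := norm_sub_le (Ξ^[i] x) (Ξ^[j] x); linarith [hx' i, hx' j]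
  · have := norm_sub_le (Ξ^[k] y) (Ξ^[l] y); linarith [hy' k, hy' l]
  · have := norm_sub_le (Ξ^[p] x) (Ξ^[q] y); linarith [hx' p, hy' q]

end TTlemmas

theorem stmt6 {X : Type*} [NormedAddCommGroup X] [NormedSpace ℝ X] [UniformConvexSpace X]
    [CompleteSpace X] (Ω Δ : Set X) (hΩ : Ω.Nonempty) (hΔ : Δ.Nonempty)
    (hΩc : IsClosed Ω) (hΔc : IsClosed Δ) (hΩconv : Convex ℝ Ω) (hΔconv : Convex ℝ Δ)
    (Ξ : X → X) (η : ℝ) (hη : η ∈ Set.Ioo (0 : ℝ) 1)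
    (hcycΩ : Set.MapsTo Ξ Ω Δ) (hcycΔ : Set.MapsTo Ξ Δ Ω)
    (hbdd : ∀ x : X, Bornology.IsBounded (Set.range fun n => Ξ^[n] x))
    (hcontr : ∀ ς ∈ Ω, ∀ ϑ ∈ Δ,
      ‖Ξ ς - Ξ ϑ‖ ≤ η * sSup { r : ℝ |
      (∃ i j : ℕ, Odd ((i : ℤ) - j) ∧ r = ‖Ξ^[i] ς - Ξ^[j] ς‖) ∨
      (∃ k l : ℕ, Odd ((k : ℤ) - l) ∧ r = ‖Ξ^[k] ϑ - Ξ^[l] ϑ‖) ∨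
      (∃ p q : ℕ, Even ((p : ℤ) - q) ∧ r = ‖Ξ^[p] ς - Ξ^[q] ϑ‖) }
        + (1 - η) * sInf (Set.image2 (fun x y => ‖x - y‖) Ω Δ)) :
    ∃ ςs ∈ Ω, ‖ςs - Ξ ςs‖ = sInf (Set.image2 (fun x y => ‖x - y‖) Ω Δ) ∧
      ∀ ς ∈ Ω, Tendsto (fun n => Ξ^[2 * n] ς) atTop (nhds ςs) := by
  obtain ⟨hη0, hη1⟩ := hη
  set d : ℝ := sInf (Set.image2 (fun x y => ‖x - y‖) Ω Δ) with hddef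
  -- basic facts about d
  have hd0 : 0 ≤ d := Real.sInf_nonneg (by rintro r ⟨a, _, b, _, rfl⟩; exact norm_nonneg _)
  have hdle : ∀ a ∈ Ω, ∀ b ∈ Δ, d ≤ ‖a - b‖ := by
    intro a ha b hb
    exact csInf_le ⟨0, by rintro r ⟨a', _, b', _, rfl⟩; exact norm_nonneg _⟩
      (Set.mem_image2_of_mem ha hb)
  -- orbit parity
  have horb : ∀ x ∈ Ω, ∀ n : ℕ, (n % 2 = 0 → Ξ^[n] x ∈ Ω) ∧ (n % 2 = 1 → Ξ^[n] x ∈ Δ) := by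
    intro x hx n
    induction n with
    | zero => exact ⟨fun _ => hx, fun h => by omega⟩
    | succ m ih =>
      rw [Function.iterate_succ_apply']
      constructor
      · intro h; exact hcycΔ (ih.2 (by omega))
      · intro h; exact hcycΩ (ih.1 (by omega))
  have horbΔ : ∀ y ∈ Δ, ∀ n : ℕ, (n % 2 = 0 → Ξ^[n] y ∈ Δ) ∧ (n % 2 = 1 → Ξ^[n] y ∈ Ω) := by
    intro y hy n
    induction n with
    | zero => exact ⟨fun _ => hy, fun h => by omega⟩
    | succ m ih =>
      rw [Function.iterate_succ_apply']
      constructor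
      · intro h; exact hcycΩ (ih.2 (by omega))
      · intro h; exact hcycΔ (ih.1 (by omega))
  have hbb : ∀ x y : X, ∀ n : ℕ, BddAbove (TT6 Ξ x y n) :=
    fun x y n => bddAbove_TT6 (hbdd x) (hbdd y)
  -- every element of TT6 is at least d
  have hTTd : ∀ x ∈ Ω, ∀ y ∈ Δ, ∀ n : ℕ, ∀ r ∈ TT6 Ξ x y n, d ≤ r := by
    intro x hx y hy n r hr
    rcases hr with ⟨i, j, _, _, ho, rfl⟩ | ⟨k, l, _, _, ho, rfl⟩ | ⟨p, q, _, _, he, rfl⟩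
    · have hp := oddZ' ho
      rcases Nat.even_or_odd i with hi | hi
      · rw [Nat.even_iff] at hi
        exact hdle _ ((horb x hx i).1 (by omega)) _ ((horb x hx j).2 (by omega))
      · rw [Nat.odd_iff] at hi
        rw [norm_sub_rev]
        exact hdle _ ((horb x hx j).1 (by omega)) _ ((horb x hx i).2 (by omega))
    · have hp := oddZ' ho
      rcases Nat.even_or_odd k with hk | hk
      · rw [Nat.even_iff] at hk
        exact hdle _ ((horbΔ y hy l).2 (by omega)) _ ((horbΔ y hy k).1 (by omega)) |>.trans
          (le_of_eq (norm_sub_rev _ _))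
      · rw [Nat.odd_iff] at hk
        exact hdle _ ((horbΔ y hy k).2 (by omega)) _ ((horbΔ y hy l).1 (by omega))
    · have hp := evenZ' he
      rcases Nat.even_or_odd p with hpp | hpp
      · rw [Nat.even_iff] at hpp
        exact hdle _ ((horb x hx p).1 (by omega)) _ ((horbΔ y hy q).1 (by omega))
      · rw [Nat.odd_iff] at hpp
        rw [norm_sub_rev]
        exact hdle _ ((horbΔ y hy q).2 (by omega)) _ ((horb x hx p).2 (by omega))
  -- d is a lower bound for the sups
  have hRd : ∀ x ∈ Ω, ∀ y ∈ Δ, ∀ n : ℕ, d ≤ sSup (TT6 Ξ x y n) := by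
    intro x hx y hy n
    have hmem : ‖Ξ^[n+1] x - Ξ^[n] x‖ ∈ TT6 Ξ x y n :=
      mem_TT6_x (by omega) le_rfl (oddZ (by omega)) rfl
    exact (hTTd x hx y hy n _ hmem).trans (le_csSup (hbb x y n) hmem)
  have hR0 : ∀ x ∈ Ω, ∀ y ∈ Δ, ∀ n : ℕ, (0:ℝ) ≤ sSup (TT6 Ξ x y n) :=
    fun x hx y hy n => hd0.trans (hRd x hx y hy n)
  -- the key contraction property
  have hkey : ∀ x ∈ Ω, ∀ y ∈ Δ, ∀ n : ℕ,
      sSup (TT6 Ξ x y (n+1)) ≤ η * sSup (TT6 Ξ x y n) + (1 - η) * d := by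
    intro x hx y hy n
    have hR0' := hR0 x hx y hy n
    have step : ∀ ς ϑ : X, ς ∈ Ω → ϑ ∈ Δ →
        (∀ r ∈ { r : ℝ |
          (∃ i j : ℕ, Odd ((i : ℤ) - j) ∧ r = ‖Ξ^[i] ς - Ξ^[j] ς‖) ∨
          (∃ k l : ℕ, Odd ((k : ℤ) - l) ∧ r = ‖Ξ^[k] ϑ - Ξ^[l] ϑ‖) ∨
          (∃ p q : ℕ, Even ((p : ℤ) - q) ∧ r = ‖Ξ^[p] ς - Ξ^[q] ϑ‖) }, r ≤ sSup (TT6 Ξ x y n)) →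
        ‖Ξ ς - Ξ ϑ‖ ≤ η * sSup (TT6 Ξ x y n) + (1 - η) * d := by
      intro ς ϑ hς hϑ hall
      refine (hcontr ς hς ϑ hϑ).trans ?_
      have hs := Real.sSup_le hall hR0'
      have := mul_le_mul_of_nonneg_left hs hη0.le
      linarith
    apply Real.sSup_le _ (by nlinarith [hRd x hx y hy n])
    rintro r (⟨i, j, hi, hj, ho, rfl⟩ | ⟨k, l, hk, hl, ho, rfl⟩ | ⟨p, q, hp, hq, he, rfl⟩)
    · -- pair on the orbit of x
      have hpar := oddZ' ho
      have main : ∀ i j : ℕ, n+1 ≤ i → n+1 ≤ j → i % 2 = 1 → j % 2 = 0 →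
          ‖Ξ^[i] x - Ξ^[j] x‖ ≤ η * sSup (TT6 Ξ x y n) + (1 - η) * d := by
        intro i j hi hj hio hje
        obtain ⟨a, rfl⟩ : ∃ a, i = 2*a+1 := ⟨i/2, by omega⟩
        obtain ⟨b, rfl⟩ : ∃ b, j = 2*b+1+1 := ⟨(j-2)/2, by omega⟩
        have h1 : Ξ^[2*a] x ∈ Ω := (horb x hx _).1 (by omega)
        have h2 : Ξ^[2*b+1] x ∈ Δ := (horb x hx _).2 (by omega)
        have hstep := step _ _ h1 h2 ?_
        · rwa [← Function.iterate_succ_apply' Ξ (2*a) x,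
            ← Function.iterate_succ_apply' Ξ (2*b+1) x] at hstep
        · rintro r (⟨i', j', ho', rfl⟩ | ⟨k', l', ho', rfl⟩ | ⟨p', q', he', rfl⟩)
          · rw [← Function.iterate_add_apply, ← Function.iterate_add_apply]
            have := oddZ' ho'
            exact le_csSup (hbb x y n) (mem_TT6_x (by omega) (by omega) (oddZ (by omega)) rfl)
          · rw [← Function.iterate_add_apply, ← Function.iterate_add_apply]
            have := oddZ' ho'
            exact le_csSup (hbb x y n) (mem_TT6_x (by omega) (by omega) (oddZ (by omega)) rfl)
          · rw [← Function.iterate_add_apply, ← Function.iterate_add_apply]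
            have := evenZ' he'
            exact le_csSup (hbb x y n) (mem_TT6_x (by omega) (by omega) (oddZ (by omega)) rfl)
      rcases Nat.even_or_odd i with hie | hio
      · rw [Nat.even_iff] at hie
        rw [norm_sub_rev]
        exact main j i hj hi (by omega) (by omega)
      · rw [Nat.odd_iff] at hio
        exact main i j hi hj (by omega) (by omega)
    · -- pair on the orbit of y
      have hpar := oddZ' ho
      have main : ∀ k l : ℕ, n+1 ≤ k → n+1 ≤ l → k % 2 = 1 → l % 2 = 0 →
          ‖Ξ^[l] y - Ξ^[k] y‖ ≤ η * sSup (TT6 Ξ x y n) + (1 - η) * d := by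
        intro k l hk hl hko hle
        obtain ⟨a, rfl⟩ : ∃ a, k = 2*a+1 := ⟨k/2, by omega⟩
        obtain ⟨b, rfl⟩ : ∃ b, l = 2*b+1+1 := ⟨(l-2)/2, by omega⟩
        have h1 : Ξ^[2*b+1] y ∈ Ω := (horbΔ y hy _).2 (by omega)
        have h2 : Ξ^[2*a] y ∈ Δ := (horbΔ y hy _).1 (by omega)
        have hstep := step _ _ h1 h2 ?_
        · rwa [← Function.iterate_succ_apply' Ξ (2*b+1) y,
            ← Function.iterate_succ_apply' Ξ (2*a) y] at hstep
        · rintro r (⟨i', j', ho', rfl⟩ | ⟨k', l', ho', rfl⟩ | ⟨p', q', he', rfl⟩)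
          · rw [← Function.iterate_add_apply, ← Function.iterate_add_apply]
            have := oddZ' ho'
            exact le_csSup (hbb x y n) (mem_TT6_y (by omega) (by omega) (oddZ (by omega)) rfl)
          · rw [← Function.iterate_add_apply, ← Function.iterate_add_apply]
            have := oddZ' ho'
            exact le_csSup (hbb x y n) (mem_TT6_y (by omega) (by omega) (oddZ (by omega)) rfl)
          · rw [← Function.iterate_add_apply, ← Function.iterate_add_apply]
            have := evenZ' he'
            exact le_csSup (hbb x y n) (mem_TT6_y (by omega) (by omega) (oddZ (by omega)) rfl)
      rcases Nat.even_or_odd k with hke | hko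
      · rw [Nat.even_iff] at hke
        exact main l k hl hk (by omega) (by omega)
      · rw [Nat.odd_iff] at hko
        rw [norm_sub_rev]
        exact main k l hk hl (by omega) (by omega)
    · -- cross pair
      have hpar := evenZ' he
      rcases Nat.even_or_odd p with hpe | hpo
      · -- both even
        rw [Nat.even_iff] at hpe
        obtain ⟨a, rfl⟩ : ∃ a, p = 2*a+1+1 := ⟨(p-2)/2, by omega⟩
        obtain ⟨b, rfl⟩ : ∃ b, q = 2*b+1+1 := ⟨(q-2)/2, by omega⟩
        have h1 : Ξ^[2*b+1] y ∈ Ω := (horbΔ y hy _).2 (by omega)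
        have h2 : Ξ^[2*a+1] x ∈ Δ := (horb x hx _).2 (by omega)
        have hstep := step _ _ h1 h2 ?_
        · rw [← Function.iterate_succ_apply' Ξ (2*b+1) y,
            ← Function.iterate_succ_apply' Ξ (2*a+1) x] at hstep
          rw [norm_sub_rev]
          exact hstep
        · rintro r (⟨i', j', ho', rfl⟩ | ⟨k', l', ho', rfl⟩ | ⟨p', q', he', rfl⟩)
          · rw [← Function.iterate_add_apply, ← Function.iterate_add_apply]
            have := oddZ' ho'
            exact le_csSup (hbb x y n) (mem_TT6_y (by omega) (by omega) (oddZ (by omega)) rfl)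
          · rw [← Function.iterate_add_apply, ← Function.iterate_add_apply]
            have := oddZ' ho'
            exact le_csSup (hbb x y n) (mem_TT6_x (by omega) (by omega) (oddZ (by omega)) rfl)
          · rw [← Function.iterate_add_apply, ← Function.iterate_add_apply]
            have := evenZ' he'
            exact le_csSup (hbb x y n)
              (mem_TT6_xy (by omega) (by omega) (evenZ (by omega)) (norm_sub_rev _ _))
      · -- both odd
        rw [Nat.odd_iff] at hpo
        obtain ⟨a, rfl⟩ : ∃ a, p = 2*a+1 := ⟨p/2, by omega⟩
        obtain ⟨b, rfl⟩ : ∃ b, q = 2*b+1 := ⟨q/2, by omega⟩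
        have h1 : Ξ^[2*a] x ∈ Ω := (horb x hx _).1 (by omega)
        have h2 : Ξ^[2*b] y ∈ Δ := (horbΔ y hy _).1 (by omega)
        have hstep := step _ _ h1 h2 ?_
        · rwa [← Function.iterate_succ_apply' Ξ (2*a) x,
            ← Function.iterate_succ_apply' Ξ (2*b) y] at hstep
        · rintro r (⟨i', j', ho', rfl⟩ | ⟨k', l', ho', rfl⟩ | ⟨p', q', he', rfl⟩)
          · rw [← Function.iterate_add_apply, ← Function.iterate_add_apply]
            have := oddZ' ho'
            exact le_csSup (hbb x y n) (mem_TT6_x (by omega) (by omega) (oddZ (by omega)) rfl)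
          · rw [← Function.iterate_add_apply, ← Function.iterate_add_apply]
            have := oddZ' ho'
            exact le_csSup (hbb x y n) (mem_TT6_y (by omega) (by omega) (oddZ (by omega)) rfl)
          · rw [← Function.iterate_add_apply, ← Function.iterate_add_apply]
            have := evenZ' he'
            exact le_csSup (hbb x y n) (mem_TT6_xy (by omega) (by omega) (evenZ (by omega)) rfl)
  -- geometric decay
  have hgeo : ∀ x ∈ Ω, ∀ y ∈ Δ, ∀ n : ℕ,
      sSup (TT6 Ξ x y n) ≤ d + η^n * (sSup (TT6 Ξ x y 0) - d) := by
    intro x hx y hy n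
    induction n with
    | zero => simp
    | succ m ih =>
      calc sSup (TT6 Ξ x y (m+1)) ≤ η * sSup (TT6 Ξ x y m) + (1 - η) * d := hkey x hx y hy m
      _ ≤ η * (d + η^m * (sSup (TT6 Ξ x y 0) - d)) + (1 - η) * d := by
          have := mul_le_mul_of_nonneg_left ih hη0.le; linarith
      _ = d + η^(m+1) * (sSup (TT6 Ξ x y 0) - d) := by ring
  have hsmall : ∀ x ∈ Ω, ∀ y ∈ Δ, ∀ δ : ℝ, 0 < δ → ∃ N : ℕ, ∀ n ≥ N,
      sSup (TT6 Ξ x y n) ≤ d + δ := by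
    intro x hx y hy δ hδ
    have htend : Tendsto (fun n : ℕ => η^n * (sSup (TT6 Ξ x y 0) - d)) atTop (nhds 0) := by
      have := (tendsto_pow_atTop_nhds_zero_of_lt_one hη0.le hη1).mul_const
        (sSup (TT6 Ξ x y 0) - d)
      simpa using this
    obtain ⟨N, hN⟩ := (htend.eventually_lt_const hδ).exists_forall_of_atTop
    exact ⟨N, fun n hn => (hgeo x hx y hy n).trans (by linarith [hN n hn])⟩
  -- convergence of even iterates
  have hconv : ∀ x ∈ Ω, ∃ ℓ ∈ Ω, Tendsto (fun n : ℕ => Ξ^[2*n] x) atTop (nhds ℓ) := by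
    intro x hx
    have hy : Ξ x ∈ Δ := hcycΩ hx
    have hC : CauchySeq (fun n : ℕ => Ξ^[2*n] x) := by
      rw [Metric.cauchySeq_iff]
      intro ε hε
      obtain ⟨δ, hδpos, hδ⟩ := ucq6 hΩconv hd0 (half_pos hε)
      obtain ⟨N, hN⟩ := hsmall x hx (Ξ x) hy δ hδpos
      refine ⟨N, fun m hm n hn => ?_⟩
      have hbmem : Ξ^[2*N+1] x ∈ Δ := (horb x hx _).2 (by omega)
      have e1 : ‖Ξ^[2*m] x - Ξ^[2*N+1] x‖ ≤ d + δ :=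
        (le_csSup (hbb x (Ξ x) N) (mem_TT6_x (by omega) (by omega) (oddZ (by omega)) rfl)).trans
          (hN N le_rfl)
      have e2 : ‖Ξ^[2*n] x - Ξ^[2*N+1] x‖ ≤ d + δ :=
        (le_csSup (hbb x (Ξ x) N) (mem_TT6_x (by omega) (by omega) (oddZ (by omega)) rfl)).trans
          (hN N le_rfl)
      have := hδ _ ((horb x hx _).1 (by omega)) _ ((horb x hx _).1 (by omega)) _
        (fun p hp => hdle p hp _ hbmem) e1 e2
      rw [dist_eq_norm]
      linarith
    obtain ⟨ℓ, hℓ⟩ := cauchySeq_tendsto_of_complete hC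
    refine ⟨ℓ, ?_, hℓ⟩
    exact hΩc.mem_of_tendsto hℓ (Filter.Eventually.of_forall fun n => (horb x hx _).1 (by omega))
  -- uniqueness of the limit
  have huniq : ∀ x ∈ Ω, ∀ x' ∈ Ω, ∀ ℓ ℓ' : X,
      Tendsto (fun n : ℕ => Ξ^[2*n] x) atTop (nhds ℓ) →
      Tendsto (fun n : ℕ => Ξ^[2*n] x') atTop (nhds ℓ') → ℓ = ℓ' := by
    intro x hx x' hx' ℓ ℓ' hℓ hℓ'
    have hy : Ξ x' ∈ Δ := hcycΩ hx'
    have key : ∀ ε : ℝ, 0 < ε → ‖ℓ - ℓ'‖ ≤ ε := by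
      intro ε hε
      obtain ⟨δ, hδpos, hδ⟩ := ucq6 hΩconv hd0 hε
      obtain ⟨N, hN⟩ := hsmall x hx (Ξ x') hy δ hδpos
      have hbound : ∀ n ≥ N, ‖Ξ^[2*n] x - Ξ^[2*(n+1)] x'‖ ≤ ε := by
        intro n hn
        have hbmem : Ξ^[2*n] (Ξ x') ∈ Δ := (horbΔ _ hy _).1 (by omega)
        have e1 : ‖Ξ^[2*n] x - Ξ^[2*n] (Ξ x')‖ ≤ d + δ :=
          (le_csSup (hbb x (Ξ x') N) (mem_TT6_xy (by omega) (by omega) (evenZ (by omega))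
            rfl)).trans (hN N le_rfl)
        have e2 : ‖Ξ^[2*n+1] (Ξ x') - Ξ^[2*n] (Ξ x')‖ ≤ d + δ :=
          (le_csSup (hbb x (Ξ x') N) (mem_TT6_y (by omega) (by omega) (oddZ (by omega))
            rfl)).trans (hN N le_rfl)
        have hcmem : Ξ^[2*n+1] (Ξ x') ∈ Ω := (horbΔ _ hy _).2 (by omega)
        have hres := hδ _ ((horb x hx _).1 (by omega)) _ hcmem _
          (fun p hp => hdle p hp _ hbmem) e1 e2
        have hrw : Ξ^[2*n+1] (Ξ x') = Ξ^[2*(n+1)] x' := by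
          rw [← Function.iterate_succ_apply Ξ (2*n+1) x']
          norm_num [Nat.mul_succ]
        rwa [hrw] at hres
      have ht2 : Tendsto (fun n : ℕ => Ξ^[2*(n+1)] x') atTop (nhds ℓ') :=
        hℓ'.comp (tendsto_add_atTop_nat 1)
      have hlim : Tendsto (fun n : ℕ => ‖Ξ^[2*n] x - Ξ^[2*(n+1)] x'‖) atTop
          (nhds ‖ℓ - ℓ'‖) := (hℓ.sub ht2).norm
      exact le_of_tendsto hlim (eventually_atTop.2 ⟨N, hbound⟩)
    have : ‖ℓ - ℓ'‖ ≤ 0 := le_of_forall_pos_le_add (fun ε hε => by linarith [key ε hε])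
    have : ℓ - ℓ' = 0 := norm_le_zero_iff.1 this
    exact sub_eq_zero.1 this
  -- the best proximity point
  obtain ⟨ς₀, hς₀⟩ := hΩ
  obtain ⟨ςs, hςsΩ, hςs⟩ := hconv ς₀ hς₀
  have htendall : ∀ ς ∈ Ω, Tendsto (fun n : ℕ => Ξ^[2*n] ς) atTop (nhds ςs) := by
    intro ς hς
    obtain ⟨ℓ, hℓΩ, hℓ⟩ := hconv ς hς
    rwa [huniq ς hς ς₀ hς₀ ℓ ςs hℓ hςs] at hℓ
  have hself : Tendsto (fun n : ℕ => Ξ^[2*n] ςs) atTop (nhds ςs) := htendall ςs hςsΩ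
  have hys : Ξ ςs ∈ Δ := hcycΩ hςsΩ
  -- the head of the orbit of ςs is controlled by the tail sup
  have claim0 : ∀ j : ℕ, j % 2 = 1 → ‖ςs - Ξ^[j] ςs‖ ≤ sSup (TT6 Ξ ςs (Ξ ςs) 1) := by
    intro j hj
    have hev : ∀ m : ℕ, 1 ≤ m →
        ‖ςs - Ξ^[j] ςs‖ ≤ ‖ςs - Ξ^[2*m] ςs‖ + sSup (TT6 Ξ ςs (Ξ ςs) 1) := by
      intro m hm
      have htri : ‖ςs - Ξ^[j] ςs‖ ≤ ‖ςs - Ξ^[2*m] ςs‖ + ‖Ξ^[2*m] ςs - Ξ^[j] ςs‖ := by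
        have : ςs - Ξ^[j] ςs = (ςs - Ξ^[2*m] ςs) + (Ξ^[2*m] ςs - Ξ^[j] ςs) := by abel
        rw [this]; exact norm_add_le _ _
      have hmem : ‖Ξ^[2*m] ςs - Ξ^[j] ςs‖ ≤ sSup (TT6 Ξ ςs (Ξ ςs) 1) :=
        le_csSup (hbb ςs (Ξ ςs) 1) (mem_TT6_x (by omega) (by omega) (oddZ (by omega)) rfl)
      linarith
    have hlim : Tendsto (fun m : ℕ => ‖ςs - Ξ^[2*m] ςs‖ + sSup (TT6 Ξ ςs (Ξ ςs) 1)) atTop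
        (nhds (0 + sSup (TT6 Ξ ςs (Ξ ςs) 1))) := by
      have h0 : Tendsto (fun m : ℕ => ‖ςs - Ξ^[2*m] ςs‖) atTop (nhds 0) := by
        have := ((tendsto_const_nhds : Tendsto (fun _ : ℕ => ςs) atTop (nhds ςs)).sub hself).norm
        simpa using this
      exact h0.add tendsto_const_nhds
    have := ge_of_tendsto hlim (eventually_atTop.2 ⟨1, hev⟩)
    linarith
  -- sSup (TT6 0) ≤ sSup (TT6 1)
  have claim1 : sSup (TT6 Ξ ςs (Ξ ςs) 0) ≤ sSup (TT6 Ξ ςs (Ξ ςs) 1) := by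
    apply Real.sSup_le _ (hR0 ςs hςsΩ (Ξ ςs) hys 1)
    rintro r (⟨i, j, _, _, ho, rfl⟩ | ⟨k, l, _, _, ho, rfl⟩ | ⟨p, q, _, _, he, rfl⟩)
    · have hpar := oddZ' ho
      rcases Nat.eq_zero_or_pos i with rfl | hi1
      · rw [Function.iterate_zero_apply]
        exact claim0 j (by omega)
      · rcases Nat.eq_zero_or_pos j with rfl | hj1
        · rw [Function.iterate_zero_apply, norm_sub_rev]
          exact claim0 i (by omega)
        · exact le_csSup (hbb ςs (Ξ ςs) 1)
            (mem_TT6_x (by omega) (by omega) (oddZ (by omega)) rfl)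
    · have hpar := oddZ' ho
      rw [← Function.iterate_succ_apply Ξ k ςs, ← Function.iterate_succ_apply Ξ l ςs]
      exact le_csSup (hbb ςs (Ξ ςs) 1)
        (mem_TT6_x (by omega) (by omega) (oddZ (by omega)) rfl)
    · have hpar := evenZ' he
      rw [← Function.iterate_succ_apply Ξ q ςs]
      rcases Nat.eq_zero_or_pos p with rfl | hp1
      · rw [Function.iterate_zero_apply]
        exact claim0 (q+1) (by omega)
      · exact le_csSup (hbb ςs (Ξ ςs) 1)
          (mem_TT6_x (by omega) (by omega) (oddZ (by omega)) rfl)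
  have hS0d : sSup (TT6 Ξ ςs (Ξ ςs) 0) ≤ d := by
    have h10 := hkey ςs hςsΩ (Ξ ςs) hys 0
    nlinarith [claim1, h10]
  have ht : ‖ςs - Ξ ςs‖ ≤ d := by
    refine le_trans (le_csSup (hbb ςs (Ξ ςs) 0)
      (mem_TT6_x (i := 0) (j := 1) (by omega) (by omega) (oddZ (by omega)) ?_)) hS0d
    simp
  exact ⟨ςs, hςsΩ, le_antisymm ht (hdle ςs hςsΩ (Ξ ςs) hys), htendall⟩
end

section
/- Let X be a uniformly convex Banach space, Ω, Δ nonempty, closed and convex subsets of X, and Ξ : X → X a cyclic orbital contraction on Ω ∪ Δ with constant η ∈ (0,1). Then there exists a best proximity point ς* ∈ Ω of Ξ such that Ξς* ∈ Δ is a best proximity point of Ξ in Δ (i.e., ‖Ξς* − Ξ(Ξς*)‖ = dist(Ω,Δ)), and for every ϑ ∈ Δ the sequence {Ξ^{2n}ϑ} converges to Ξς* in norm. -/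
open Filter Metric Function Bornology

namespace Stmt7

variable {X : Type*} [NormedAddCommGroup X]

def SS (Ξ : X → X) (ς ϑ : X) : Set ℝ :=
  { r : ℝ |
      (∃ i j : ℕ, Odd ((i : ℤ) - j) ∧ r = ‖Ξ^[i] ς - Ξ^[j] ς‖) ∨
      (∃ k l : ℕ, Odd ((k : ℤ) - l) ∧ r = ‖Ξ^[k] ϑ - Ξ^[l] ϑ‖) ∨
      (∃ p q : ℕ, Even ((p : ℤ) - q) ∧ r = ‖Ξ^[p] ς - Ξ^[q] ϑ‖) }

def ODD (Ξ : X → X) (z : X) : Set ℝ :=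
  { r : ℝ | ∃ i j : ℕ, Odd ((i : ℤ) - j) ∧ r = ‖Ξ^[i] z - Ξ^[j] z‖ }

variable {Ξ : X → X} {Ω Δ : Set X} {η d : ℝ}

lemma mem_SS_left {ς ϑ : X} {i j : ℕ} (h : Odd ((i : ℤ) - j)) :
    ‖Ξ^[i] ς - Ξ^[j] ς‖ ∈ SS Ξ ς ϑ := Or.inl ⟨i, j, h, rfl⟩

lemma mem_SS_right {ς ϑ : X} {k l : ℕ} (h : Odd ((k : ℤ) - l)) :
    ‖Ξ^[k] ϑ - Ξ^[l] ϑ‖ ∈ SS Ξ ς ϑ := Or.inr (Or.inl ⟨k, l, h, rfl⟩)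

lemma mem_SS_cross {ς ϑ : X} {p q : ℕ} (h : Even ((p : ℤ) - q)) :
    ‖Ξ^[p] ς - Ξ^[q] ϑ‖ ∈ SS Ξ ς ϑ := Or.inr (Or.inr ⟨p, q, h, rfl⟩)

lemma SS_nonempty {ς ϑ : X} : (SS Ξ ς ϑ).Nonempty :=
  ⟨‖Ξ^[0] ς - Ξ^[0] ϑ‖, mem_SS_cross (by norm_num)⟩

lemma ODD_sub_left {ς ϑ : X} : ODD Ξ ς ⊆ SS Ξ ς ϑ := by
  rintro r ⟨i, j, h, rfl⟩; exact mem_SS_left h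

lemma ODD_sub_right {ς ϑ : X} : ODD Ξ ϑ ⊆ SS Ξ ς ϑ := by
  rintro r ⟨i, j, h, rfl⟩; exact mem_SS_right h

lemma ODD_nonempty {z : X} : (ODD Ξ z).Nonempty :=
  ⟨‖Ξ^[1] z - Ξ^[0] z‖, 1, 0, by norm_num, rfl⟩

lemma norm_iter_le (hbdd : ∀ x : X, IsBounded (Set.range fun n => Ξ^[n] x)) (x : X) :
    ∃ C : ℝ, 0 ≤ C ∧ ∀ n : ℕ, ‖Ξ^[n] x‖ ≤ C := by
  obtain ⟨C, hC⟩ := isBounded_iff_forall_norm_le.mp (hbdd x)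
  exact ⟨C, le_trans (norm_nonneg _) (hC _ ⟨0, rfl⟩), fun n => hC _ ⟨n, rfl⟩⟩

lemma SS_bddAbove (hbdd : ∀ x : X, IsBounded (Set.range fun n => Ξ^[n] x)) (ς ϑ : X) :
    BddAbove (SS Ξ ς ϑ) := by
  obtain ⟨C₁, hC₁0, hC₁⟩ := norm_iter_le hbdd ς
  obtain ⟨C₂, hC₂0, hC₂⟩ := norm_iter_le hbdd ϑ
  refine ⟨C₁ + C₁ + (C₂ + C₂), ?_⟩
  rintro r (⟨i, j, _, rfl⟩ | ⟨k, l, _, rfl⟩ | ⟨p, q, _, rfl⟩)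
  · have := norm_sub_le (Ξ^[i] ς) (Ξ^[j] ς); linarith [hC₁ i, hC₁ j]
  · have := norm_sub_le (Ξ^[k] ϑ) (Ξ^[l] ϑ); linarith [hC₂ k, hC₂ l]
  · have := norm_sub_le (Ξ^[p] ς) (Ξ^[q] ϑ); linarith [hC₁ p, hC₂ q]

lemma ODD_bddAbove (hbdd : ∀ x : X, IsBounded (Set.range fun n => Ξ^[n] x)) (z : X) :
    BddAbove (ODD Ξ z) := by
  obtain ⟨C, _, hC⟩ := norm_iter_le hbdd z
  refine ⟨C + C, ?_⟩
  rintro r ⟨i, j, _, rfl⟩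
  have := norm_sub_le (Ξ^[i] z) (Ξ^[j] z); linarith [hC i, hC j]

lemma pair_bound (hη0 : 0 ≤ η)
    (hbdd : ∀ x : X, IsBounded (Set.range fun n => Ξ^[n] x))
    (hcontr : ∀ ς ∈ Ω, ∀ ϑ ∈ Δ, ‖Ξ ς - Ξ ϑ‖ ≤ η * sSup (SS Ξ ς ϑ) + (1 - η) * d)
    {a b : X} (ha : a ∈ Ω) (hb : b ∈ Δ) {T : Set ℝ} (hT : BddAbove T)
    (hsub : SS Ξ a b ⊆ T) :
    ‖Ξ a - Ξ b‖ ≤ η * sSup T + (1 - η) * d := by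
  refine (hcontr a ha b hb).trans ?_
  have h2 : sSup (SS Ξ a b) ≤ sSup T := csSup_le_csSup hT SS_nonempty hsub
  have := mul_le_mul_of_nonneg_left h2 hη0
  linarith

lemma iter_mem (hcycΩ : Set.MapsTo Ξ Ω Δ) (hcycΔ : Set.MapsTo Ξ Δ Ω) :
    ∀ (n : ℕ) (x : X),
      (x ∈ Ω → (Even n → Ξ^[n] x ∈ Ω) ∧ (Odd n → Ξ^[n] x ∈ Δ)) ∧
      (x ∈ Δ → (Even n → Ξ^[n] x ∈ Δ) ∧ (Odd n → Ξ^[n] x ∈ Ω)) := by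
  intro n
  induction n with
  | zero =>
    intro x
    constructor <;> intro hx <;> constructor <;> intro h
    · simpa using hx
    · exact absurd h (by simp [Nat.odd_iff])
    · simpa using hx
    · exact absurd h (by simp [Nat.odd_iff])
  | succ n ih =>
    intro x
    have hpar1 : Even (n+1) → Odd n := by
      intro h; rw [Nat.even_iff] at h; rw [Nat.odd_iff]; omega
    have hpar2 : Odd (n+1) → Even n := by
      intro h; rw [Nat.odd_iff] at h; rw [Nat.even_iff]; omega
    constructor <;> intro hx <;> constructor <;> intro h <;> rw [iterate_succ_apply]
    · exact ((ih (Ξ x)).2 (hcycΩ hx)).2 (hpar1 h)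
    · exact ((ih (Ξ x)).2 (hcycΩ hx)).1 (hpar2 h)
    · exact ((ih (Ξ x)).1 (hcycΔ hx)).2 (hpar1 h)
    · exact ((ih (Ξ x)).1 (hcycΔ hx)).1 (hpar2 h)

lemma SS_sub_same {z : X} {s t : ℕ} (h : Odd ((s : ℤ) - t)) :
    SS Ξ (Ξ^[s] z) (Ξ^[t] z) ⊆ ODD Ξ z := by
  rintro r (⟨i, j, hij, rfl⟩ | ⟨k, l, hkl, rfl⟩ | ⟨p, q, hpq, rfl⟩)
  · exact ⟨i + s, j + s, by rw [Int.odd_iff] at hij ⊢; push_cast; omega,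
      by rw [iterate_add_apply, iterate_add_apply]⟩
  · exact ⟨k + t, l + t, by rw [Int.odd_iff] at hkl ⊢; push_cast; omega,
      by rw [iterate_add_apply, iterate_add_apply]⟩
  · exact ⟨p + s, q + t,
      by rw [Int.odd_iff] at h ⊢; rw [Int.even_iff] at hpq; push_cast; omega,
      by rw [iterate_add_apply, iterate_add_apply]⟩

lemma SS_sub_cross {ς ϑ : X} {s t : ℕ} (h : Even ((s : ℤ) - t)) :
    SS Ξ (Ξ^[s] ς) (Ξ^[t] ϑ) ⊆ SS Ξ ς ϑ := by
  rintro r (⟨i, j, hij, rfl⟩ | ⟨k, l, hkl, rfl⟩ | ⟨p, q, hpq, rfl⟩)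
  · rw [← iterate_add_apply, ← iterate_add_apply]
    exact mem_SS_left (by rw [Int.odd_iff] at hij ⊢; push_cast; omega)
  · rw [← iterate_add_apply, ← iterate_add_apply]
    exact mem_SS_right (by rw [Int.odd_iff] at hkl ⊢; push_cast; omega)
  · rw [← iterate_add_apply, ← iterate_add_apply]
    exact mem_SS_cross
      (by rw [Int.even_iff] at hpq h ⊢; push_cast; omega)

lemma SS_sub_cross' {ς ϑ : X} {s t : ℕ} (h : Even ((s : ℤ) - t)) :
    SS Ξ (Ξ^[s] ϑ) (Ξ^[t] ς) ⊆ SS Ξ ς ϑ := by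
  rintro r (⟨i, j, hij, rfl⟩ | ⟨k, l, hkl, rfl⟩ | ⟨p, q, hpq, rfl⟩)
  · rw [← iterate_add_apply, ← iterate_add_apply]
    exact mem_SS_right (by rw [Int.odd_iff] at hij ⊢; push_cast; omega)
  · rw [← iterate_add_apply, ← iterate_add_apply]
    exact mem_SS_left (by rw [Int.odd_iff] at hkl ⊢; push_cast; omega)
  · rw [← iterate_add_apply, ← iterate_add_apply, norm_sub_rev]
    exact mem_SS_cross
      (by rw [Int.even_iff] at hpq h ⊢; push_cast; omega)

lemma M_step (hη0 : 0 ≤ η)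
    (hbdd : ∀ x : X, IsBounded (Set.range fun n => Ξ^[n] x))
    (hcontr : ∀ ς ∈ Ω, ∀ ϑ ∈ Δ, ‖Ξ ς - Ξ ϑ‖ ≤ η * sSup (SS Ξ ς ϑ) + (1 - η) * d)
    (hcycΩ : Set.MapsTo Ξ Ω Δ) (hcycΔ : Set.MapsTo Ξ Δ Ω)
    {ς ϑ : X} (hς : ς ∈ Ω) (hϑ : ϑ ∈ Δ) :
    sSup (SS Ξ (Ξ^[2] ς) (Ξ^[2] ϑ)) ≤ η * sSup (SS Ξ ς ϑ) + (1 - η) * d := by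
  apply csSup_le SS_nonempty
  rintro r (⟨i, j, hij, rfl⟩ | ⟨k, l, hkl, rfl⟩ | ⟨p, q, hpq, rfl⟩)
  · rw [← iterate_add_apply, ← iterate_add_apply,
      show i + 2 = (i+1) + 1 from by omega, show j + 2 = (j+1) + 1 from by omega,
      iterate_succ_apply' Ξ (i+1) ς, iterate_succ_apply' Ξ (j+1) ς]
    rcases Nat.even_or_odd i with hi | hi
    · have hi' : i % 2 = 0 := Nat.even_iff.mp hi
      have hj' : j % 2 = 1 := by rw [Int.odd_iff] at hij; omega
      rw [norm_sub_rev]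
      refine pair_bound hη0 hbdd hcontr
        (((iter_mem hcycΩ hcycΔ (j+1) ς).1 hς).1 (by rw [Nat.even_iff]; omega))
        (((iter_mem hcycΩ hcycΔ (i+1) ς).1 hς).2 (by rw [Nat.odd_iff]; omega))
        (SS_bddAbove hbdd ς ϑ)
        ((SS_sub_same (by rw [Int.odd_iff]; push_cast; omega)).trans ODD_sub_left)
    · have hi' : i % 2 = 1 := Nat.odd_iff.mp hi
      have hj' : j % 2 = 0 := by rw [Int.odd_iff] at hij; omega
      refine pair_bound hη0 hbdd hcontr
        (((iter_mem hcycΩ hcycΔ (i+1) ς).1 hς).1 (by rw [Nat.even_iff]; omega))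
        (((iter_mem hcycΩ hcycΔ (j+1) ς).1 hς).2 (by rw [Nat.odd_iff]; omega))
        (SS_bddAbove hbdd ς ϑ)
        ((SS_sub_same (by rw [Int.odd_iff]; push_cast; omega)).trans ODD_sub_left)
  · rw [← iterate_add_apply, ← iterate_add_apply,
      show k + 2 = (k+1) + 1 from by omega, show l + 2 = (l+1) + 1 from by omega,
      iterate_succ_apply' Ξ (k+1) ϑ, iterate_succ_apply' Ξ (l+1) ϑ]
    rcases Nat.even_or_odd k with hk | hk
    · have hk' : k % 2 = 0 := Nat.even_iff.mp hk
      have hl' : l % 2 = 1 := by rw [Int.odd_iff] at hkl; omega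
      refine pair_bound hη0 hbdd hcontr
        (((iter_mem hcycΩ hcycΔ (k+1) ϑ).2 hϑ).2 (by rw [Nat.odd_iff]; omega))
        (((iter_mem hcycΩ hcycΔ (l+1) ϑ).2 hϑ).1 (by rw [Nat.even_iff]; omega))
        (SS_bddAbove hbdd ς ϑ)
        ((SS_sub_same (by rw [Int.odd_iff]; push_cast; omega)).trans ODD_sub_right)
    · have hk' : k % 2 = 1 := Nat.odd_iff.mp hk
      have hl' : l % 2 = 0 := by rw [Int.odd_iff] at hkl; omega
      rw [norm_sub_rev]
      refine pair_bound hη0 hbdd hcontr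
        (((iter_mem hcycΩ hcycΔ (l+1) ϑ).2 hϑ).2 (by rw [Nat.odd_iff]; omega))
        (((iter_mem hcycΩ hcycΔ (k+1) ϑ).2 hϑ).1 (by rw [Nat.even_iff]; omega))
        (SS_bddAbove hbdd ς ϑ)
        ((SS_sub_same (by rw [Int.odd_iff]; push_cast; omega)).trans ODD_sub_right)
  · rw [← iterate_add_apply, ← iterate_add_apply,
      show p + 2 = (p+1) + 1 from by omega, show q + 2 = (q+1) + 1 from by omega,
      iterate_succ_apply' Ξ (p+1) ς, iterate_succ_apply' Ξ (q+1) ϑ]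
    rcases Nat.even_or_odd p with hp | hp
    · have hp' : p % 2 = 0 := Nat.even_iff.mp hp
      have hq' : q % 2 = 0 := by rw [Int.even_iff] at hpq; omega
      rw [norm_sub_rev]
      refine pair_bound hη0 hbdd hcontr
        (((iter_mem hcycΩ hcycΔ (q+1) ϑ).2 hϑ).2 (by rw [Nat.odd_iff]; omega))
        (((iter_mem hcycΩ hcycΔ (p+1) ς).1 hς).2 (by rw [Nat.odd_iff]; omega))
        (SS_bddAbove hbdd ς ϑ)
        (SS_sub_cross' (by rw [Int.even_iff]; push_cast; omega))
    · have hp' : p % 2 = 1 := Nat.odd_iff.mp hp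
      have hq' : q % 2 = 1 := by rw [Int.even_iff] at hpq; omega
      refine pair_bound hη0 hbdd hcontr
        (((iter_mem hcycΩ hcycΔ (p+1) ς).1 hς).1 (by rw [Nat.even_iff]; omega))
        (((iter_mem hcycΩ hcycΔ (q+1) ϑ).2 hϑ).1 (by rw [Nat.even_iff]; omega))
        (SS_bddAbove hbdd ς ϑ)
        (SS_sub_cross (by rw [Int.even_iff]; push_cast; omega))

lemma M_iter (hη0 : 0 ≤ η)
    (hbdd : ∀ x : X, IsBounded (Set.range fun n => Ξ^[n] x))
    (hcontr : ∀ ς ∈ Ω, ∀ ϑ ∈ Δ, ‖Ξ ς - Ξ ϑ‖ ≤ η * sSup (SS Ξ ς ϑ) + (1 - η) * d)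
    (hcycΩ : Set.MapsTo Ξ Ω Δ) (hcycΔ : Set.MapsTo Ξ Δ Ω)
    {ς ϑ : X} (hς : ς ∈ Ω) (hϑ : ϑ ∈ Δ) :
    ∀ n : ℕ, sSup (SS Ξ (Ξ^[2*n] ς) (Ξ^[2*n] ϑ)) ≤ d + η^n * (sSup (SS Ξ ς ϑ) - d) := by
  intro n
  induction n with
  | zero =>
    simp only [Nat.mul_zero, iterate_zero_apply, pow_zero, one_mul]
    linarith
  | succ n ih =>
    have h2 : 2*(n+1) = 2 + 2*n := by ring
    rw [h2, iterate_add_apply, iterate_add_apply]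
    have hstep := M_step hη0 hbdd hcontr hcycΩ hcycΔ
      (((iter_mem hcycΩ hcycΔ (2*n) ς).1 hς).1 ⟨n, by ring⟩)
      (((iter_mem hcycΩ hcycΔ (2*n) ϑ).2 hϑ).1 ⟨n, by ring⟩)
    have hmul := mul_le_mul_of_nonneg_left ih hη0
    have he : η * (d + η^n * (sSup (SS Ξ ς ϑ) - d)) + (1-η)*d
        = d + η^(n+1) * (sSup (SS Ξ ς ϑ) - d) := by rw [pow_succ]; ring
    linarith

lemma master (hη : η ∈ Set.Ioo (0:ℝ) 1)
    (hbdd : ∀ x : X, IsBounded (Set.range fun n => Ξ^[n] x))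
    (hcontr : ∀ ς ∈ Ω, ∀ ϑ ∈ Δ, ‖Ξ ς - Ξ ϑ‖ ≤ η * sSup (SS Ξ ς ϑ) + (1 - η) * d)
    (hcycΩ : Set.MapsTo Ξ Ω Δ) (hcycΔ : Set.MapsTo Ξ Δ Ω)
    {ς ϑ : X} (hς : ς ∈ Ω) (hϑ : ϑ ∈ Δ) {ε : ℝ} (hε : 0 < ε) :
    ∃ N : ℕ, ∀ a b : ℕ, 2*N ≤ a → 2*N ≤ b →
      (Odd ((a:ℤ) - b) → ‖Ξ^[a] ς - Ξ^[b] ς‖ ≤ d + ε ∧ ‖Ξ^[a] ϑ - Ξ^[b] ϑ‖ ≤ d + ε) ∧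
      (Even ((a:ℤ) - b) → ‖Ξ^[a] ς - Ξ^[b] ϑ‖ ≤ d + ε) := by
  have hC : Tendsto (fun n : ℕ => η ^ n * (sSup (SS Ξ ς ϑ) - d)) atTop (nhds 0) := by
    simpa using
      (tendsto_pow_atTop_nhds_zero_of_lt_one hη.1.le hη.2).mul_const (sSup (SS Ξ ς ϑ) - d)
  obtain ⟨N, hN⟩ := (hC.eventually_lt_const hε).exists
  have hMN := M_iter hη.1.le hbdd hcontr hcycΩ hcycΔ hς hϑ N
  refine ⟨N, fun a b ha hb => ⟨fun hodd => ⟨?_, ?_⟩, fun heven => ?_⟩⟩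
  · obtain ⟨m, rfl⟩ : ∃ m, a = m + 2*N := ⟨a - 2*N, by omega⟩
    obtain ⟨k, rfl⟩ : ∃ k, b = k + 2*N := ⟨b - 2*N, by omega⟩
    rw [iterate_add_apply, iterate_add_apply]
    have h1 := le_csSup (SS_bddAbove hbdd (Ξ^[2*N] ς) (Ξ^[2*N] ϑ))
      (mem_SS_left (ϑ := Ξ^[2*N] ϑ) (i := m) (j := k)
        (by rw [Int.odd_iff] at hodd ⊢; push_cast at hodd ⊢; omega))
    linarith
  · obtain ⟨m, rfl⟩ : ∃ m, a = m + 2*N := ⟨a - 2*N, by omega⟩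
    obtain ⟨k, rfl⟩ : ∃ k, b = k + 2*N := ⟨b - 2*N, by omega⟩
    rw [iterate_add_apply, iterate_add_apply]
    have h1 := le_csSup (SS_bddAbove hbdd (Ξ^[2*N] ς) (Ξ^[2*N] ϑ))
      (mem_SS_right (ς := Ξ^[2*N] ς) (k := m) (l := k)
        (by rw [Int.odd_iff] at hodd ⊢; push_cast at hodd ⊢; omega))
    linarith
  · obtain ⟨m, rfl⟩ : ∃ m, a = m + 2*N := ⟨a - 2*N, by omega⟩
    obtain ⟨k, rfl⟩ : ∃ k, b = k + 2*N := ⟨b - 2*N, by omega⟩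
    rw [iterate_add_apply, iterate_add_apply]
    have h1 := le_csSup (SS_bddAbove hbdd (Ξ^[2*N] ς) (Ξ^[2*N] ϑ))
      (mem_SS_cross (p := m) (q := k)
        (by rw [Int.even_iff] at heven ⊢; push_cast at heven ⊢; omega))
    linarith
lemma orbitR (hη : η ∈ Set.Ioo (0:ℝ) 1)
    (hbdd : ∀ x : X, IsBounded (Set.range fun n => Ξ^[n] x))
    (hcontr : ∀ ς ∈ Ω, ∀ ϑ ∈ Δ, ‖Ξ ς - Ξ ϑ‖ ≤ η * sSup (SS Ξ ς ϑ) + (1 - η) * d)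
    {z : X}
    (hz : ∀ i j : ℕ, Odd ((i:ℤ) - j) →
      (Ξ^[i] z ∈ Ω ∧ Ξ^[j] z ∈ Δ) ∨ (Ξ^[j] z ∈ Ω ∧ Ξ^[i] z ∈ Δ))
    (hlim : Tendsto (fun n => Ξ^[2*n] z) atTop (nhds z)) :
    ∀ i j : ℕ, Odd ((i:ℤ) - j) → ‖Ξ^[i] z - Ξ^[j] z‖ ≤ d := by
  have hOb : BddAbove (ODD Ξ z) := ODD_bddAbove hbdd z
  set R := sSup (ODD Ξ z) with hR
  have step1 : ∀ i j : ℕ, 1 ≤ i → 1 ≤ j → Odd ((i:ℤ) - j) →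
      ‖Ξ^[i] z - Ξ^[j] z‖ ≤ η * R + (1-η) * d := by
    intro i j hi hj hij
    obtain ⟨m, rfl⟩ : ∃ m, i = m + 1 := ⟨i - 1, by omega⟩
    obtain ⟨k, rfl⟩ : ∃ k, j = k + 1 := ⟨j - 1, by omega⟩
    have hmk : Odd ((m:ℤ) - k) := by
      rw [Int.odd_iff] at hij ⊢; push_cast at hij ⊢; omega
    rw [iterate_succ_apply' Ξ m z, iterate_succ_apply' Ξ k z]
    rcases hz m k hmk with ⟨hΩm, hΔk⟩ | ⟨hΩk, hΔm⟩
    · exact pair_bound hη.1.le hbdd hcontr hΩm hΔk hOb (SS_sub_same hmk)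
    · rw [norm_sub_rev]
      exact pair_bound hη.1.le hbdd hcontr hΩk hΔm hOb
        (SS_sub_same (by rw [Int.odd_iff] at hmk ⊢; omega))
  have hzero : Tendsto (fun n => ‖Ξ^[2*n] z - z‖) atTop (nhds 0) := by
    have h := (hlim.sub (tendsto_const_nhds (x := z))).norm
    simpa using h
  have step2 : ∀ i : ℕ, Odd (i:ℤ) → ‖Ξ^[i] z - z‖ ≤ η * R + (1-η) * d := by
    intro i hi
    have hb : ∀ n : ℕ, 1 ≤ n → ‖Ξ^[i] z - z‖ ≤ η * R + (1-η)*d + ‖Ξ^[2*n] z - z‖ := by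
      intro n hn
      have htri : ‖Ξ^[i] z - z‖ ≤ ‖Ξ^[i] z - Ξ^[2*n] z‖ + ‖Ξ^[2*n] z - z‖ := by
        have h : Ξ^[i] z - z = (Ξ^[i] z - Ξ^[2*n] z) + (Ξ^[2*n] z - z) := by abel
        rw [h]; exact norm_add_le _ _
      have h1 : 1 ≤ i := by rw [Int.odd_iff] at hi; omega
      have h2 := step1 i (2*n) h1 (by omega)
        (by rw [Int.odd_iff] at hi ⊢; push_cast; omega)
      linarith
    have hT : Tendsto (fun n => η * R + (1-η)*d + ‖Ξ^[2*n] z - z‖) atTop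
        (nhds (η * R + (1-η)*d + 0)) := tendsto_const_nhds.add hzero
    have := ge_of_tendsto hT (eventually_atTop.mpr ⟨1, hb⟩)
    linarith
  have step3 : R ≤ η * R + (1-η) * d := by
    apply csSup_le ODD_nonempty
    rintro r ⟨i, j, hij, rfl⟩
    rcases Nat.eq_zero_or_pos j with hj | hj
    · subst hj
      rw [iterate_zero_apply]
      exact step2 i (by rw [Int.odd_iff] at hij ⊢; push_cast at hij ⊢; omega)
    · rcases Nat.eq_zero_or_pos i with hi | hi
      · subst hi
        rw [iterate_zero_apply, norm_sub_rev]
        exact step2 j (by rw [Int.odd_iff] at hij ⊢; push_cast at hij ⊢; omega)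
      · exact step1 i j hi hj hij
  have hRd : R ≤ d := by
    by_contra hcon
    push_neg at hcon
    have h1 : (0:ℝ) < 1 - η := by linarith [hη.2]
    nlinarith [mul_pos h1 (sub_pos.mpr hcon)]
  intro i j hij
  exact (le_csSup hOb ⟨i, j, hij, rfl⟩).trans hRd

lemma uc {Y : Type*} [NormedAddCommGroup Y] [NormedSpace ℝ Y] [UniformConvexSpace Y]
    {d : ℝ} (hd0 : 0 ≤ d) {ε : ℝ} (hε : 0 < ε) :
    ∃ ε' > 0, ∀ x z y : Y, ‖x - y‖ ≤ d + ε' → ‖z - y‖ ≤ d + ε' →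
      d ≤ ‖(1/2 : ℝ) • x + (1/2 : ℝ) • z - y‖ → ‖x - z‖ ≤ ε := by
  rcases eq_or_lt_of_le hd0 with hd | hd
  · refine ⟨ε/2, by linarith, fun x z y hx hz _ => ?_⟩
    rw [← hd] at hx hz
    have h : ‖x - z‖ ≤ ‖x - y‖ + ‖z - y‖ := by
      have h2 : x - z = (x - y) - (z - y) := by abel
      rw [h2]; exact norm_sub_le _ _
    linarith
  · obtain ⟨δ, hδ0, Hδ⟩ :=
      exists_forall_closed_ball_dist_add_le_two_sub Y (div_pos hε (by linarith : (0:ℝ) < d + 1))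
    refine ⟨min 1 (d*δ/4), by positivity, fun x z y hx hz hmid => ?_⟩
    set ε' := min 1 (d*δ/4) with hε'def
    have hε'0 : 0 < ε' := by positivity
    have hε'1 : ε' ≤ 1 := min_le_left _ _
    have hε'2 : ε' ≤ d*δ/4 := min_le_right _ _
    by_contra hcon
    push_neg at hcon
    set R := d + ε' with hRdef
    have hR0 : 0 < R := by linarith
    have hu : ‖R⁻¹ • (x - y)‖ ≤ 1 := by
      rw [norm_smul, norm_inv, Real.norm_eq_abs, abs_of_pos hR0, inv_mul_le_iff₀ hR0, mul_one]
      exact hx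
    have hv : ‖R⁻¹ • (z - y)‖ ≤ 1 := by
      rw [norm_smul, norm_inv, Real.norm_eq_abs, abs_of_pos hR0, inv_mul_le_iff₀ hR0, mul_one]
      exact hz
    have huv : ε / (d + 1) ≤ ‖R⁻¹ • (x - y) - R⁻¹ • (z - y)‖ := by
      rw [← smul_sub, show x - y - (z - y) = x - z from by abel, norm_smul, norm_inv,
        Real.norm_eq_abs, abs_of_pos hR0]
      have hR1 : R ≤ d + 1 := by linarith
      calc ε / (d + 1) ≤ ε / R := by
            apply div_le_div_of_nonneg_left hε.le hR0 hR1
        _ ≤ ‖x - z‖ / R := by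
            exact (div_le_div_iff_of_pos_right hR0).mpr hcon.le
        _ = R⁻¹ * ‖x - z‖ := by rw [div_eq_inv_mul]
    have hsum := Hδ hu hv huv
    have hxz : R⁻¹ • (x - y) + R⁻¹ • (z - y) = R⁻¹ • (x + z - (2:ℝ) • y) := by
      rw [← smul_add]
      congr 1
      rw [two_smul]
      abel
    rw [hxz, norm_smul, norm_inv, Real.norm_eq_abs, abs_of_pos hR0,
      inv_mul_le_iff₀ hR0] at hsum
    have hmid2 : ‖(1/2:ℝ) • x + (1/2:ℝ) • z - y‖ = (1/2) * ‖x + z - (2:ℝ) • y‖ := by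
      have h3 : (1/2:ℝ) • x + (1/2:ℝ) • z - y = (1/2:ℝ) • (x + z - (2:ℝ) • y) := by
        rw [smul_sub, smul_add, smul_smul]
        norm_num
      rw [h3, norm_smul]
      norm_num
    rw [hmid2] at hmid
    nlinarith [hδ0, hd, hε'2, hε'0]

lemma uc_eq {Y : Type*} [NormedAddCommGroup Y] [NormedSpace ℝ Y] [UniformConvexSpace Y]
    {d : ℝ} (hd0 : 0 ≤ d) {x z y : Y}
    (hx : ‖x - y‖ = d) (hz : ‖z - y‖ = d)
    (hmid : d ≤ ‖(1/2:ℝ) • x + (1/2:ℝ) • z - y‖) : x = z := by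
  have h : ∀ ε : ℝ, 0 < ε → ‖x - z‖ ≤ ε := by
    intro ε hε
    obtain ⟨ε', hε'0, H⟩ := uc (Y := Y) hd0 hε
    exact H x z y (by linarith) (by linarith) hmid
  have h0 : ‖x - z‖ ≤ 0 := by
    by_contra hcon
    push_neg at hcon
    linarith [h (‖x - z‖/2) (by linarith)]
  exact sub_eq_zero.mp (norm_le_zero_iff.mp h0)
lemma cauchy_delta {Y : Type*} [NormedAddCommGroup Y] [NormedSpace ℝ Y] [UniformConvexSpace Y]
    {Ω Δ : Set Y} {Ξ : Y → Y} {η d : ℝ} (hη : η ∈ Set.Ioo (0:ℝ) 1)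
    (hbdd : ∀ x : Y, IsBounded (Set.range fun n => Ξ^[n] x))
    (hcontr : ∀ ς ∈ Ω, ∀ ϑ ∈ Δ, ‖Ξ ς - Ξ ϑ‖ ≤ η * sSup (SS Ξ ς ϑ) + (1 - η) * d)
    (hcycΩ : Set.MapsTo Ξ Ω Δ) (hcycΔ : Set.MapsTo Ξ Δ Ω)
    (hd0 : 0 ≤ d) (hdle : ∀ x ∈ Ω, ∀ y ∈ Δ, d ≤ ‖x - y‖) (hΔconv : Convex ℝ Δ)
    {ς ϑ : Y} (hς : ς ∈ Ω) (hϑ : ϑ ∈ Δ) :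
    CauchySeq (fun n => Ξ^[2*n] ϑ) := by
  rw [Metric.cauchySeq_iff]
  intro ε hε
  obtain ⟨ε', hε'0, H⟩ := uc (Y := Y) hd0 (half_pos hε)
  obtain ⟨N, hN⟩ := master hη hbdd hcontr hcycΩ hcycΔ hς hϑ hε'0
  refine ⟨N, fun m hm n hn => ?_⟩
  have hxy : ‖Ξ^[2*m] ϑ - Ξ^[2*N+1] ϑ‖ ≤ d + ε' :=
    ((hN (2*m) (2*N+1) (by omega) (by omega)).1
      (by rw [Int.odd_iff]; push_cast; omega)).2
  have hzy : ‖Ξ^[2*n] ϑ - Ξ^[2*N+1] ϑ‖ ≤ d + ε' :=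
    ((hN (2*n) (2*N+1) (by omega) (by omega)).1
      (by rw [Int.odd_iff]; push_cast; omega)).2
  have hmemx : Ξ^[2*m] ϑ ∈ Δ := ((iter_mem hcycΩ hcycΔ (2*m) ϑ).2 hϑ).1 ⟨m, two_mul m⟩
  have hmemz : Ξ^[2*n] ϑ ∈ Δ := ((iter_mem hcycΩ hcycΔ (2*n) ϑ).2 hϑ).1 ⟨n, two_mul n⟩
  have hmemy : Ξ^[2*N+1] ϑ ∈ Ω := ((iter_mem hcycΩ hcycΔ (2*N+1) ϑ).2 hϑ).2 ⟨N, rfl⟩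
  have hmidmem : (1/2:ℝ) • Ξ^[2*m] ϑ + (1/2:ℝ) • Ξ^[2*n] ϑ ∈ Δ :=
    hΔconv hmemx hmemz (by norm_num) (by norm_num) (by norm_num)
  have hmid : d ≤ ‖(1/2:ℝ) • Ξ^[2*m] ϑ + (1/2:ℝ) • Ξ^[2*n] ϑ - Ξ^[2*N+1] ϑ‖ := by
    have h := hdle _ hmemy _ hmidmem
    rwa [norm_sub_rev] at h
  have := H _ _ _ hxy hzy hmid
  rw [dist_eq_norm]
  linarith

lemma cauchy_omega {Y : Type*} [NormedAddCommGroup Y] [NormedSpace ℝ Y] [UniformConvexSpace Y]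
    {Ω Δ : Set Y} {Ξ : Y → Y} {η d : ℝ} (hη : η ∈ Set.Ioo (0:ℝ) 1)
    (hbdd : ∀ x : Y, IsBounded (Set.range fun n => Ξ^[n] x))
    (hcontr : ∀ ς ∈ Ω, ∀ ϑ ∈ Δ, ‖Ξ ς - Ξ ϑ‖ ≤ η * sSup (SS Ξ ς ϑ) + (1 - η) * d)
    (hcycΩ : Set.MapsTo Ξ Ω Δ) (hcycΔ : Set.MapsTo Ξ Δ Ω)
    (hd0 : 0 ≤ d) (hdle : ∀ x ∈ Ω, ∀ y ∈ Δ, d ≤ ‖x - y‖) (hΩconv : Convex ℝ Ω)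
    {ς ϑ : Y} (hς : ς ∈ Ω) (hϑ : ϑ ∈ Δ) :
    CauchySeq (fun n => Ξ^[2*n] ς) := by
  rw [Metric.cauchySeq_iff]
  intro ε hε
  obtain ⟨ε', hε'0, H⟩ := uc (Y := Y) hd0 (half_pos hε)
  obtain ⟨N, hN⟩ := master hη hbdd hcontr hcycΩ hcycΔ hς hϑ hε'0
  refine ⟨N, fun m hm n hn => ?_⟩
  have hxy : ‖Ξ^[2*m] ς - Ξ^[2*N+1] ς‖ ≤ d + ε' :=
    ((hN (2*m) (2*N+1) (by omega) (by omega)).1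
      (by rw [Int.odd_iff]; push_cast; omega)).1
  have hzy : ‖Ξ^[2*n] ς - Ξ^[2*N+1] ς‖ ≤ d + ε' :=
    ((hN (2*n) (2*N+1) (by omega) (by omega)).1
      (by rw [Int.odd_iff]; push_cast; omega)).1
  have hmemx : Ξ^[2*m] ς ∈ Ω := ((iter_mem hcycΩ hcycΔ (2*m) ς).1 hς).1 ⟨m, two_mul m⟩
  have hmemz : Ξ^[2*n] ς ∈ Ω := ((iter_mem hcycΩ hcycΔ (2*n) ς).1 hς).1 ⟨n, two_mul n⟩
  have hmemy : Ξ^[2*N+1] ς ∈ Δ := ((iter_mem hcycΩ hcycΔ (2*N+1) ς).1 hς).2 ⟨N, rfl⟩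
  have hmidmem : (1/2:ℝ) • Ξ^[2*m] ς + (1/2:ℝ) • Ξ^[2*n] ς ∈ Ω :=
    hΩconv hmemx hmemz (by norm_num) (by norm_num) (by norm_num)
  have hmid : d ≤ ‖(1/2:ℝ) • Ξ^[2*m] ς + (1/2:ℝ) • Ξ^[2*n] ς - Ξ^[2*N+1] ς‖ :=
    hdle _ hmidmem _ hmemy
  have := H _ _ _ hxy hzy hmid
  rw [dist_eq_norm]
  linarith
end Stmt7
theorem stmt7 {X : Type*} [NormedAddCommGroup X] [NormedSpace ℝ X] [UniformConvexSpace X]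
    [CompleteSpace X] (Ω Δ : Set X) (hΩ : Ω.Nonempty) (hΔ : Δ.Nonempty)
    (hΩc : IsClosed Ω) (hΔc : IsClosed Δ) (hΩconv : Convex ℝ Ω) (hΔconv : Convex ℝ Δ)
    (Ξ : X → X) (η : ℝ) (hη : η ∈ Set.Ioo (0 : ℝ) 1)
    (hcycΩ : Set.MapsTo Ξ Ω Δ) (hcycΔ : Set.MapsTo Ξ Δ Ω)
    (hbdd : ∀ x : X, Bornology.IsBounded (Set.range fun n => Ξ^[n] x))
    (hcontr : ∀ ς ∈ Ω, ∀ ϑ ∈ Δ,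
      ‖Ξ ς - Ξ ϑ‖ ≤ η * sSup { r : ℝ |
      (∃ i j : ℕ, Odd ((i : ℤ) - j) ∧ r = ‖Ξ^[i] ς - Ξ^[j] ς‖) ∨
      (∃ k l : ℕ, Odd ((k : ℤ) - l) ∧ r = ‖Ξ^[k] ϑ - Ξ^[l] ϑ‖) ∨
      (∃ p q : ℕ, Even ((p : ℤ) - q) ∧ r = ‖Ξ^[p] ς - Ξ^[q] ϑ‖) }
        + (1 - η) * sInf (Set.image2 (fun x y => ‖x - y‖) Ω Δ)) :
    ∃ ςs ∈ Ω, ‖ςs - Ξ ςs‖ = sInf (Set.image2 (fun x y => ‖x - y‖) Ω Δ) ∧ Ξ ςs ∈ Δ ∧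
      ‖Ξ ςs - Ξ (Ξ ςs)‖ = sInf (Set.image2 (fun x y => ‖x - y‖) Ω Δ) ∧
      ∀ ϑ ∈ Δ, Tendsto (fun n => Ξ^[2 * n] ϑ) atTop (nhds (Ξ ςs)) := by
  obtain ⟨ϑ₀, hϑ₀⟩ := hΔ
  obtain ⟨ς₀, hς₀⟩ := hΩ
  set d := sInf (Set.image2 (fun x y => ‖x - y‖) Ω Δ) with hdd
  have hbb : BddBelow (Set.image2 (fun (x y : X) => ‖x - y‖) Ω Δ) :=
    ⟨0, by rintro r ⟨x, hx, y, hy, rfl⟩; positivity⟩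
  have hd0 : 0 ≤ d :=
    le_csInf ⟨_, Set.mem_image2_of_mem hς₀ hϑ₀⟩ (by rintro r ⟨x, hx, y, hy, rfl⟩; positivity)
  have hdle : ∀ x ∈ Ω, ∀ y ∈ Δ, d ≤ ‖x - y‖ := fun x hx y hy =>
    csInf_le hbb (Set.mem_image2_of_mem hx hy)
  have hcontr' : ∀ a ∈ Ω, ∀ b ∈ Δ,
      ‖Ξ a - Ξ b‖ ≤ η * sSup (Stmt7.SS Ξ a b) + (1 - η) * d := hcontr
  obtain ⟨p, hp⟩ := cauchySeq_tendsto_of_complete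
    (Stmt7.cauchy_delta hη hbdd hcontr' hcycΩ hcycΔ hd0 hdle hΔconv hς₀ hϑ₀)
  have hpΔ : p ∈ Δ := hΔc.mem_of_tendsto hp
    (Filter.Eventually.of_forall fun n =>
      ((Stmt7.iter_mem hcycΩ hcycΔ (2*n) ϑ₀).2 hϑ₀).1 ⟨n, two_mul n⟩)
  obtain ⟨q, hq0⟩ := cauchySeq_tendsto_of_complete
    (Stmt7.cauchy_omega hη hbdd hcontr' hcycΩ hcycΔ hd0 hdle hΩconv hς₀ hϑ₀)
  have hqΩ : q ∈ Ω := hΩc.mem_of_tendsto hq0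
    (Filter.Eventually.of_forall fun n =>
      ((Stmt7.iter_mem hcycΩ hcycΔ (2*n) ς₀).1 hς₀).1 ⟨n, two_mul n⟩)
  -- all even orbits starting in Δ converge to p
  have hΔlim : ∀ ϑ' ∈ Δ, Tendsto (fun n => Ξ^[2*n] ϑ') atTop (nhds p) := by
    intro ϑ' hϑ'
    obtain ⟨L, hL⟩ := cauchySeq_tendsto_of_complete
      (Stmt7.cauchy_delta hη hbdd hcontr' hcycΩ hcycΔ hd0 hdle hΔconv hς₀ hϑ')
    have hΞϑ' : Ξ ϑ' ∈ Ω := hcycΔ hϑ'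
    have hx : Tendsto (fun n => Ξ^[2*n+1] (Ξ ϑ')) atTop (nhds L) := by
      have h2 : (fun n => Ξ^[2*n+1] (Ξ ϑ')) = (fun n => Ξ^[2*(n+1)] ϑ') := by
        funext n
        rw [← Function.iterate_succ_apply]
        congr 1
      rw [h2]
      exact hL.comp (tendsto_add_atTop_nat 1)
    suffices hLp : L = p by rwa [hLp] at hL
    have key : ∀ ε : ℝ, 0 < ε → ‖L - p‖ ≤ ε := by
      intro ε hε
      obtain ⟨ε', hε'0, H⟩ := Stmt7.uc (Y := X) hd0 hε
      obtain ⟨N, hN⟩ := Stmt7.master hη hbdd hcontr' hcycΩ hcycΔ hΞϑ' hϑ₀ hε'0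
      have hb : ∀ n, N ≤ n → ‖Ξ^[2*n+1] (Ξ ϑ') - Ξ^[2*n] ϑ₀‖ ≤ ε := by
        intro n hn
        have hxy : ‖Ξ^[2*n+1] (Ξ ϑ') - Ξ^[2*n] (Ξ ϑ')‖ ≤ d + ε' :=
          ((hN (2*n+1) (2*n) (by omega) (by omega)).1
            (by rw [Int.odd_iff]; push_cast; omega)).1
        have hzy : ‖Ξ^[2*n] ϑ₀ - Ξ^[2*n] (Ξ ϑ')‖ ≤ d + ε' := by
          have h := (hN (2*n) (2*n) (by omega) (by omega)).2 (by simp)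
          rwa [norm_sub_rev] at h
        have hmx : Ξ^[2*n+1] (Ξ ϑ') ∈ Δ :=
          ((Stmt7.iter_mem hcycΩ hcycΔ (2*n+1) (Ξ ϑ')).1 hΞϑ').2 ⟨n, rfl⟩
        have hmz : Ξ^[2*n] ϑ₀ ∈ Δ :=
          ((Stmt7.iter_mem hcycΩ hcycΔ (2*n) ϑ₀).2 hϑ₀).1 ⟨n, two_mul n⟩
        have hmy : Ξ^[2*n] (Ξ ϑ') ∈ Ω :=
          ((Stmt7.iter_mem hcycΩ hcycΔ (2*n) (Ξ ϑ')).1 hΞϑ').1 ⟨n, two_mul n⟩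
        have hmm : (1/2:ℝ) • Ξ^[2*n+1] (Ξ ϑ') + (1/2:ℝ) • Ξ^[2*n] ϑ₀ ∈ Δ :=
          hΔconv hmx hmz (by norm_num) (by norm_num) (by norm_num)
        have hmid : d ≤ ‖(1/2:ℝ) • Ξ^[2*n+1] (Ξ ϑ') + (1/2:ℝ) • Ξ^[2*n] ϑ₀ - Ξ^[2*n] (Ξ ϑ')‖ := by
          have h := hdle _ hmy _ hmm
          rwa [norm_sub_rev] at h
        exact H _ _ _ hxy hzy hmid
      have hnt : Tendsto (fun n => ‖Ξ^[2*n+1] (Ξ ϑ') - Ξ^[2*n] ϑ₀‖) atTop (nhds ‖L - p‖) :=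
        (hx.sub hp).norm
      exact le_of_tendsto hnt (eventually_atTop.mpr ⟨N, hb⟩)
    have h0 : ‖L - p‖ ≤ 0 := by
      by_contra hcon
      push_neg at hcon
      linarith [key (‖L - p‖/2) (by linarith)]
    exact sub_eq_zero.mp (norm_le_zero_iff.mp h0)
  -- all even orbits starting in Ω converge to q
  have hΩlim : ∀ ς' ∈ Ω, Tendsto (fun n => Ξ^[2*n] ς') atTop (nhds q) := by
    intro ς' hς'
    obtain ⟨L, hL⟩ := cauchySeq_tendsto_of_complete
      (Stmt7.cauchy_omega hη hbdd hcontr' hcycΩ hcycΔ hd0 hdle hΩconv hς' hϑ₀)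
    have hΞς₀ : Ξ ς₀ ∈ Δ := hcycΩ hς₀
    have hz : Tendsto (fun n => Ξ^[2*n+1] (Ξ ς₀)) atTop (nhds q) := by
      have h2 : (fun n => Ξ^[2*n+1] (Ξ ς₀)) = (fun n => Ξ^[2*(n+1)] ς₀) := by
        funext n
        rw [← Function.iterate_succ_apply]
        congr 1
      rw [h2]
      exact hq0.comp (tendsto_add_atTop_nat 1)
    suffices hLq : L = q by rwa [hLq] at hL
    have key : ∀ ε : ℝ, 0 < ε → ‖L - q‖ ≤ ε := by
      intro ε hε
      obtain ⟨ε', hε'0, H⟩ := Stmt7.uc (Y := X) hd0 hε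
      obtain ⟨N, hN⟩ := Stmt7.master hη hbdd hcontr' hcycΩ hcycΔ hς' hΞς₀ hε'0
      have hb : ∀ n, N ≤ n → ‖Ξ^[2*n] ς' - Ξ^[2*n+1] (Ξ ς₀)‖ ≤ ε := by
        intro n hn
        have hxy : ‖Ξ^[2*n] ς' - Ξ^[2*n] (Ξ ς₀)‖ ≤ d + ε' :=
          (hN (2*n) (2*n) (by omega) (by omega)).2 (by simp)
        have hzy : ‖Ξ^[2*n+1] (Ξ ς₀) - Ξ^[2*n] (Ξ ς₀)‖ ≤ d + ε' :=
          ((hN (2*n+1) (2*n) (by omega) (by omega)).1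
            (by rw [Int.odd_iff]; push_cast; omega)).2
        have hmx : Ξ^[2*n] ς' ∈ Ω :=
          ((Stmt7.iter_mem hcycΩ hcycΔ (2*n) ς').1 hς').1 ⟨n, two_mul n⟩
        have hmz : Ξ^[2*n+1] (Ξ ς₀) ∈ Ω :=
          ((Stmt7.iter_mem hcycΩ hcycΔ (2*n+1) (Ξ ς₀)).2 hΞς₀).2 ⟨n, rfl⟩
        have hmy : Ξ^[2*n] (Ξ ς₀) ∈ Δ :=
          ((Stmt7.iter_mem hcycΩ hcycΔ (2*n) (Ξ ς₀)).2 hΞς₀).1 ⟨n, two_mul n⟩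
        have hmm : (1/2:ℝ) • Ξ^[2*n] ς' + (1/2:ℝ) • Ξ^[2*n+1] (Ξ ς₀) ∈ Ω :=
          hΩconv hmx hmz (by norm_num) (by norm_num) (by norm_num)
        exact H _ _ _ hxy hzy (hdle _ hmm _ hmy)
      have hnt : Tendsto (fun n => ‖Ξ^[2*n] ς' - Ξ^[2*n+1] (Ξ ς₀)‖) atTop (nhds ‖L - q‖) :=
        (hL.sub hz).norm
      exact le_of_tendsto hnt (eventually_atTop.mpr ⟨N, hb⟩)
    have h0 : ‖L - q‖ ≤ 0 := by
      by_contra hcon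
      push_neg at hcon
      linarith [key (‖L - q‖/2) (by linarith)]
    exact sub_eq_zero.mp (norm_le_zero_iff.mp h0)
  -- orbit of q
  have hzq : ∀ i j : ℕ, Odd ((i:ℤ) - j) →
      (Ξ^[i] q ∈ Ω ∧ Ξ^[j] q ∈ Δ) ∨ (Ξ^[j] q ∈ Ω ∧ Ξ^[i] q ∈ Δ) := by
    intro i j hij
    rw [Int.odd_iff] at hij
    rcases Nat.even_or_odd i with hi | hi
    · have hi' := Nat.even_iff.mp hi
      left
      exact ⟨((Stmt7.iter_mem hcycΩ hcycΔ i q).1 hqΩ).1 hi,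
        ((Stmt7.iter_mem hcycΩ hcycΔ j q).1 hqΩ).2 (by rw [Nat.odd_iff]; omega)⟩
    · have hi' := Nat.odd_iff.mp hi
      right
      exact ⟨((Stmt7.iter_mem hcycΩ hcycΔ j q).1 hqΩ).1 (by rw [Nat.even_iff]; omega),
        ((Stmt7.iter_mem hcycΩ hcycΔ i q).1 hqΩ).2 hi⟩
  have hRq := Stmt7.orbitR hη hbdd hcontr' hzq (hΩlim q hqΩ)
  have hΞqΔ : Ξ q ∈ Δ := hcycΩ hqΩ
  have hqΞ : ‖q - Ξ q‖ = d := by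
    have h1 := hRq 1 0 (by norm_num)
    simp only [Function.iterate_one, Function.iterate_zero_apply] at h1
    rw [norm_sub_rev] at h1
    exact le_antisymm h1 (hdle q hqΩ (Ξ q) hΞqΔ)
  have hoddq : Tendsto (fun n => Ξ^[2*n] (Ξ q)) atTop (nhds p) := hΔlim (Ξ q) hΞqΔ
  have hqp : ‖q - p‖ = d := by
    refine le_antisymm ?_ (hdle q hqΩ p hpΔ)
    have hb : ∀ n : ℕ, ‖q - Ξ^[2*n] (Ξ q)‖ ≤ d := by
      intro n
      have h := hRq 0 (2*n+1) (by rw [Int.odd_iff]; push_cast; omega)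
      rw [Function.iterate_zero_apply, Function.iterate_succ_apply] at h
      exact h
    have hnt : Tendsto (fun n => ‖q - Ξ^[2*n] (Ξ q)‖) atTop (nhds ‖q - p‖) :=
      (tendsto_const_nhds.sub hoddq).norm
    exact le_of_tendsto hnt (Filter.Eventually.of_forall hb)
  have hΞqp : Ξ q = p := by
    have hmm : (1/2:ℝ) • Ξ q + (1/2:ℝ) • p ∈ Δ :=
      hΔconv hΞqΔ hpΔ (by norm_num) (by norm_num) (by norm_num)
    refine Stmt7.uc_eq hd0 (y := q) ?_ ?_ ?_
    · rw [norm_sub_rev]; exact hqΞ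
    · rw [norm_sub_rev]; exact hqp
    · have h := hdle q hqΩ _ hmm
      rwa [norm_sub_rev] at h
  -- orbit of p
  have hzp : ∀ i j : ℕ, Odd ((i:ℤ) - j) →
      (Ξ^[i] p ∈ Ω ∧ Ξ^[j] p ∈ Δ) ∨ (Ξ^[j] p ∈ Ω ∧ Ξ^[i] p ∈ Δ) := by
    intro i j hij
    rw [Int.odd_iff] at hij
    rcases Nat.even_or_odd i with hi | hi
    · have hi' := Nat.even_iff.mp hi
      right
      exact ⟨((Stmt7.iter_mem hcycΩ hcycΔ j p).2 hpΔ).2 (by rw [Nat.odd_iff]; omega),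
        ((Stmt7.iter_mem hcycΩ hcycΔ i p).2 hpΔ).1 hi⟩
    · have hi' := Nat.odd_iff.mp hi
      left
      exact ⟨((Stmt7.iter_mem hcycΩ hcycΔ i p).2 hpΔ).2 hi,
        ((Stmt7.iter_mem hcycΩ hcycΔ j p).2 hpΔ).1 (by rw [Nat.even_iff]; omega)⟩
  have hRp := Stmt7.orbitR hη hbdd hcontr' hzp (hΔlim p hpΔ)
  have hpΞ : ‖p - Ξ p‖ = d := by
    have h1 := hRp 1 0 (by norm_num)
    simp only [Function.iterate_one, Function.iterate_zero_apply] at h1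
    rw [norm_sub_rev] at h1
    refine le_antisymm h1 ?_
    have h2 := hdle (Ξ p) (hcycΔ hpΔ) p hpΔ
    rwa [norm_sub_rev] at h2
  refine ⟨q, hqΩ, hqΞ, hΞqΔ, ?_, ?_⟩
  · rw [hΞqp]
    exact hpΞ
  · intro ϑ' hϑ'
    rw [hΞqp]
    exact hΔlim ϑ' hϑ'
end

section
/- Let X be a uniformly convex Banach space and let Ω, Δ be nonempty, closed and convex subsets of X. Let Ξ : X → X satisfy Ξ(Ω) ⊆ Δ, Ξ(Δ) ⊆ Ω, and suppose there exists η ∈ (0,1) such that for all ς ∈ Ω and ϑ ∈ Δ: ‖Ξς − Ξϑ‖ ≤ η · max{‖ς − ϑ‖, ‖ς − Ξς‖, ‖ϑ − Ξϑ‖} + (1 − η) · dist(Ω,Δ). Then Ξ has a best proximity point, i.e., there exists ϱ ∈ Ω ∪ Δ with ‖ϱ − Ξϱ‖ = dist(Ω,Δ). -/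
open Filter Metric


lemma uc_lemma {X : Type*} [NormedAddCommGroup X] [NormedSpace ℝ X] [UniformConvexSpace X]
    (Ω Δ : Set X) (hΩconv : Convex ℝ Ω) (d : ℝ) (hd0 : 0 ≤ d)
    (hdle : ∀ x ∈ Ω, ∀ y ∈ Δ, d ≤ ‖x - y‖) (ε : ℝ) (hε : 0 < ε) :
    ∃ δ, 0 < δ ∧ ∀ x ∈ Ω, ∀ x' ∈ Ω, ∀ y ∈ Δ,
      ‖x - y‖ ≤ d + δ → ‖x' - y‖ ≤ d + δ → ‖x - x'‖ ≤ ε := by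
  rcases eq_or_lt_of_le hd0 with hd0' | hdpos
  · refine ⟨ε/2, by positivity, fun x hx x' hx' y hy h1 h2 => ?_⟩
    have hxx : x - x' = (x - y) - (x' - y) := by abel
    calc ‖x - x'‖ = ‖(x - y) - (x' - y)‖ := by rw [← hxx]
      _ ≤ ‖x - y‖ + ‖x' - y‖ := norm_sub_le _ _
      _ ≤ (d + ε/2) + (d + ε/2) := add_le_add h1 h2
      _ = ε := by rw [← hd0']; ring
  · obtain ⟨δ₀, hδ₀, H⟩ := exists_forall_closed_ball_dist_add_le_two_sub X
      (show (0:ℝ) < ε/(d+1) by positivity)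
    have hδpos : (0:ℝ) < min 1 (d*δ₀/2) := lt_min one_pos (by positivity)
    refine ⟨min 1 (d*δ₀/2), hδpos, fun x hx x' hx' y hy h1 h2 => ?_⟩
    set δ := min 1 (d*δ₀/2) with hδdef
    have hδ1 : δ ≤ 1 := min_le_left _ _
    have hδ2 : δ ≤ d*δ₀/2 := min_le_right _ _
    have hr : (0:ℝ) < d + δ := by linarith
    by_contra hcon
    push_neg at hcon
    set u := (d+δ)⁻¹ • (x - y) with hu_def
    set v := (d+δ)⁻¹ • (x' - y) with hv_def
    have hnorm : ∀ z : X, ‖(d+δ)⁻¹ • z‖ = ‖z‖ / (d+δ) := by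
      intro z
      rw [norm_smul, Real.norm_eq_abs, abs_inv, abs_of_pos hr]
      ring
    have hu : ‖u‖ ≤ 1 := by rw [hu_def, hnorm, div_le_one hr]; exact h1
    have hv : ‖v‖ ≤ 1 := by rw [hv_def, hnorm, div_le_one hr]; exact h2
    have huv : ε/(d+1) ≤ ‖u - v‖ := by
      have h3 : u - v = (d+δ)⁻¹ • (x - x') := by
        rw [hu_def, hv_def, ← smul_sub]
        congr 1
        abel
      rw [h3, hnorm, div_le_div_iff₀ (by positivity) hr]
      nlinarith [norm_nonneg (x - x')]
    have hsum := H hu hv huv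
    have hmid : (1/2:ℝ) • x + (1/2:ℝ) • x' ∈ Ω :=
      hΩconv hx hx' (by norm_num) (by norm_num) (by norm_num)
    have hge : d ≤ ‖(1/2:ℝ) • x + (1/2:ℝ) • x' - y‖ := hdle _ hmid y hy
    have hrel : u + v = (d+δ)⁻¹ • ((2:ℝ) • ((1/2:ℝ) • x + (1/2:ℝ) • x' - y)) := by
      rw [hu_def, hv_def, ← smul_add]
      congr 1
      module
    have hvalue : ‖u + v‖ = (2 * ‖(1/2:ℝ) • x + (1/2:ℝ) • x' - y‖) / (d + δ) := by
      rw [hrel, hnorm, norm_smul, Real.norm_eq_abs]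
      norm_num
    have h2d : 2 * d / (d + δ) ≤ 2 - δ₀ := by
      calc 2 * d / (d + δ) ≤ ‖u + v‖ := by
            rw [hvalue, div_le_div_iff₀ hr hr]
            nlinarith
        _ ≤ 2 - δ₀ := hsum
    rw [div_le_iff₀ hr] at h2d
    nlinarith

set_option maxHeartbeats 2000000 in
theorem stmt8 {X : Type*} [NormedAddCommGroup X] [NormedSpace ℝ X] [UniformConvexSpace X]
    [CompleteSpace X] (Ω Δ : Set X) (hΩ : Ω.Nonempty) (hΔ : Δ.Nonempty)
    (hΩc : IsClosed Ω) (hΔc : IsClosed Δ) (hΩconv : Convex ℝ Ω) (hΔconv : Convex ℝ Δ)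
    (Ξ : X → X) (hcycΩ : Set.MapsTo Ξ Ω Δ) (hcycΔ : Set.MapsTo Ξ Δ Ω)
    (η : ℝ) (hη : η ∈ Set.Ioo (0 : ℝ) 1)
    (hcontr : ∀ ς ∈ Ω, ∀ ϑ ∈ Δ,
      ‖Ξ ς - Ξ ϑ‖ ≤ η * max ‖ς - ϑ‖ (max ‖ς - Ξ ς‖ ‖ϑ - Ξ ϑ‖)
        + (1 - η) * sInf (Set.image2 (fun x y => ‖x - y‖) Ω Δ)) :
    ∃ ϱ ∈ Ω ∪ Δ, ‖ϱ - Ξ ϱ‖ = sInf (Set.image2 (fun x y => ‖x - y‖) Ω Δ) := by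
  obtain ⟨hη1, hη2⟩ := hη
  set d := sInf (Set.image2 (fun x y => ‖x - y‖) Ω Δ) with hd_def
  obtain ⟨ς₀, hς₀⟩ := hΩ
  have hbdd : BddBelow (Set.image2 (fun x y => ‖x - y‖) Ω Δ) := by
    refine ⟨0, ?_⟩
    rintro r ⟨x, hx, y, hy, rfl⟩
    exact norm_nonneg _
  have hdle : ∀ x ∈ Ω, ∀ y ∈ Δ, d ≤ ‖x - y‖ := by
    intro x hx y hy
    exact csInf_le hbdd (Set.mem_image2_of_mem hx hy)
  have hd0 : 0 ≤ d := by
    refine le_csInf (Set.Nonempty.image2 ⟨ς₀, hς₀⟩ hΔ) ?_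
    rintro r ⟨x, hx, y, hy, rfl⟩
    exact norm_nonneg _
  -- the orbit
  set s : ℕ → X := fun n => Ξ^[n] ς₀ with hs_def
  have hsucc : ∀ n, s (n + 1) = Ξ (s n) := by
    intro n
    simp [hs_def, Function.iterate_succ_apply']
  have hmem : ∀ n, (Even n → s n ∈ Ω) ∧ (Odd n → s n ∈ Δ) := by
    intro n
    induction n with
    | zero =>
      refine ⟨fun _ => hς₀, fun h => absurd h (by simp)⟩
    | succ n ih =>
      constructor
      · intro h
        rw [hsucc]
        rw [Nat.even_add_one, Nat.not_even_iff_odd] at h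
        exact hcycΔ (ih.2 h)
      · intro h
        rw [hsucc]
        rw [Nat.odd_add_one, Nat.not_odd_iff_even] at h
        exact hcycΩ (ih.1 h)
  set a : ℕ → ℝ := fun n => ‖s n - s (n + 1)‖ with ha_def
  have ha0 : ∀ n, 0 ≤ a n := fun n => norm_nonneg _
  have had : ∀ n, d ≤ a n := by
    intro n
    rcases Nat.even_or_odd n with h | h
    · exact hdle _ ((hmem n).1 h) _ ((hmem (n+1)).2 (by rw [Nat.odd_add_one, Nat.not_odd_iff_even]; exact h))
    · rw [show a n = ‖s (n+1) - s n‖ from norm_sub_rev _ _]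
      exact hdle _ ((hmem (n+1)).1 (by rw [Nat.even_add_one, Nat.not_even_iff_odd]; exact h)) _ ((hmem n).2 h)
  have step : ∀ i j, (Even i ∧ Odd j) ∨ (Odd i ∧ Even j) →
      ‖s (i+1) - s (j+1)‖ ≤ η * max ‖s i - s j‖ (max (a i) (a j)) + (1 - η) * d := by
    intro i j h
    rcases h with ⟨hi, hj⟩ | ⟨hi, hj⟩
    · have := hcontr (s i) ((hmem i).1 hi) (s j) ((hmem j).2 hj)
      rw [← hsucc, ← hsucc] at this
      exact this
    · have := hcontr (s j) ((hmem j).1 hj) (s i) ((hmem i).2 hi)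
      rw [← hsucc, ← hsucc, norm_sub_rev (s (j+1)), norm_sub_rev (s j) (s i), max_comm (a j) (a i)] at this
      exact this
  have parity_pair : ∀ i j : ℕ, Odd (i + j) → (Even i ∧ Odd j) ∨ (Odd i ∧ Even j) := by
    intro i j h
    rw [Nat.odd_iff] at h
    simp only [Nat.even_iff, Nat.odd_iff]
    omega
  have key : ∀ n, a (n + 1) ≤ d + η * (a n - d) := by
    intro n
    have h := step n (n+1) (parity_pair _ _ (by rw [show n + (n+1) = 2*n+1 by ring]; exact odd_two_mul_add_one n))
    rcases le_total (a (n+1)) (a n) with hc | hc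
    · have hm : max ‖s n - s (n+1)‖ (max (a n) (a (n+1))) = a n := by
        rw [max_eq_left hc]
        exact max_self _
      rw [hm] at h
      nlinarith
    · have hm : max ‖s n - s (n+1)‖ (max (a n) (a (n+1))) = a (n+1) := by
        rw [max_eq_right hc]
        exact max_eq_right hc
      rw [hm] at h
      have hle : a (n+1) ≤ d := by nlinarith
      nlinarith [had n]
  have geo : ∀ n, a n ≤ d + η ^ n * (a 0 - d) := by
    intro n
    induction n with
    | zero => simp
    | succ n ih =>
      calc a (n+1) ≤ d + η * (a n - d) := key n
        _ ≤ d + η * (η ^ n * (a 0 - d)) := by nlinarith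
        _ = d + η ^ (n+1) * (a 0 - d) := by ring
  have abound : ∀ n, a n ≤ a 0 := by
    intro n
    have h1 : η ^ n ≤ 1 := pow_le_one₀ hη1.le hη2.le
    have h2 : 0 ≤ a 0 - d := by linarith [had 0]
    nlinarith [geo n]
  -- boundedness of the orbit
  set u : ℕ → ℝ := fun k => ‖s 1 - s k‖ with hu_def
  have hu0 : ∀ k, 0 ≤ u k := fun k => norm_nonneg _
  set C : ℝ := 3 * a 0 + 2 * a 1 + d with hC_def
  have hC0 : 0 ≤ C := by
    have := ha0 0; have := ha0 1
    simp only [hC_def]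
    linarith
  have ustep : ∀ k, u (k + 1) ≤ η * u k + C := by
    intro k
    rcases Nat.even_or_odd k with hk | hk
    · have h := step k 1 (Or.inl ⟨hk, odd_one⟩)
      have tri : ‖s 1 - s (k+1)‖ ≤ ‖s 1 - s 2‖ + ‖s 2 - s (k+1)‖ := by
        have := dist_triangle (s 1) (s 2) (s (k+1))
        simpa [dist_eq_norm] using this
      have hrev : ‖s 2 - s (k+1)‖ = ‖s (k+1) - s 2‖ := norm_sub_rev _ _
      have hm : max ‖s k - s 1‖ (max (a k) (a 1)) ≤ u k + a 0 + a 1 := by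
        refine max_le ?_ (max_le ?_ ?_)
        · rw [show ‖s k - s 1‖ = u k from norm_sub_rev _ _]
          linarith [ha0 0, ha0 1]
        · linarith [abound k, hu0 k, ha0 1]
        · linarith [hu0 k, ha0 0]
      have h2 : ‖s (k+1) - s 2‖ ≤ η * (u k + a 0 + a 1) + (1 - η) * d :=
        h.trans (by nlinarith)
      have hak : η * (u k + a 0 + a 1) ≤ η * u k + a 0 + a 1 := by nlinarith [hu0 k, ha0 0, ha0 1]
      show u (k+1) ≤ η * u k + C
      simp only [hu_def, hC_def]
      calc ‖s 1 - s (k+1)‖ ≤ ‖s 1 - s 2‖ + ‖s (k+1) - s 2‖ := by rw [← hrev]; exact tri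
        _ ≤ a 1 + (η * (u k + a 0 + a 1) + (1 - η) * d) := by
            have : ‖s 1 - s 2‖ = a 1 := rfl
            linarith [h2]
        _ ≤ η * u k + (3 * a 0 + 2 * a 1 + d) := by nlinarith [ha0 0]
    · have h := step 0 k (Or.inl ⟨Even.zero, hk⟩)
      have tri : ‖s 0 - s k‖ ≤ ‖s 0 - s 1‖ + ‖s 1 - s k‖ := by
        have := dist_triangle (s 0) (s 1) (s k)
        simpa [dist_eq_norm] using this
      have hm : max ‖s 0 - s k‖ (max (a 0) (a k)) ≤ u k + 2 * a 0 := by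
        refine max_le ?_ (max_le ?_ ?_)
        · have : ‖s 0 - s 1‖ = a 0 := rfl
          linarith [ha0 0]
        · linarith [hu0 k, ha0 0]
        · linarith [abound k, hu0 k, ha0 0]
      have h2 : ‖s 1 - s (k+1)‖ ≤ η * (u k + 2 * a 0) + (1 - η) * d :=
        h.trans (by nlinarith)
      show u (k+1) ≤ η * u k + C
      simp only [hu_def, hC_def]
      calc ‖s 1 - s (k+1)‖ ≤ η * (u k + 2 * a 0) + (1 - η) * d := h2
        _ ≤ η * u k + (3 * a 0 + 2 * a 1 + d) := by nlinarith [ha0 0, ha0 1]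
  set B : ℝ := u 0 + C / (1 - η) with hB_def
  have h1η : (0:ℝ) < 1 - η := by linarith
  have hfrac : (1 - η) * (C / (1 - η)) = C := mul_div_cancel₀ C (ne_of_gt h1η)
  have hB0 : 0 ≤ B := by
    have := div_nonneg hC0 h1η.le
    simp only [hB_def]
    linarith [hu0 0]
  have hBB : η * B = B - (1 - η) * u 0 - C := by
    have : (1 - η) * B = (1 - η) * u 0 + C := by
      simp only [hB_def, mul_add, hfrac]
    linarith [this]
  have ubound : ∀ k, u k ≤ B := by
    intro k
    induction k with
    | zero =>
      simp only [hB_def]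
      have := div_nonneg hC0 h1η.le
      linarith
    | succ k ih =>
      have h1 : η * u k ≤ η * B := mul_le_mul_of_nonneg_left ih hη1.le
      have h2 : 0 ≤ (1 - η) * u 0 := mul_nonneg h1η.le (hu0 0)
      calc u (k+1) ≤ η * u k + C := ustep k
        _ ≤ η * B + C := by linarith
        _ ≤ B := by linarith [hBB]
  -- cross-distance estimate
  set M : ℝ := a 0 + B with hM_def
  have hM0 : 0 ≤ M := by simp only [hM_def]; linarith [ha0 0, hB0]
  have haM : a 0 - d ≤ M := by simp only [hM_def]; linarith [hB0, ha0 0]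
  have cross : ∀ k i, ‖s i - s (i + (2 * k + 1))‖ ≤ d + η ^ i * M := by
    intro k i
    induction i with
    | zero =>
      have tri : ‖s 0 - s (2*k+1)‖ ≤ ‖s 0 - s 1‖ + ‖s 1 - s (2*k+1)‖ := by
        have := dist_triangle (s 0) (s 1) (s (2*k+1))
        simpa [dist_eq_norm] using this
      have h1 : ‖s 0 - s 1‖ = a 0 := rfl
      have h2 : ‖s 1 - s (2*k+1)‖ = u (2*k+1) := rfl
      simp only [zero_add, pow_zero, one_mul]
      calc ‖s 0 - s (2*k+1)‖ ≤ a 0 + u (2*k+1) := by rw [← h1, ← h2]; exact tri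
        _ ≤ d + M := by simp only [hM_def]; linarith [ubound (2*k+1)]
    | succ i ih =>
      have hodd : Odd (i + (i + (2*k+1))) := by
        rw [Nat.odd_iff]; omega
      have h := step i (i + (2*k+1)) (parity_pair _ _ hodd)
      have hidx : i + (2*k+1) + 1 = (i+1) + (2*k+1) := by ring
      rw [hidx] at h
      have hpow : η ^ (i + (2*k+1)) ≤ η ^ i :=
        pow_le_pow_of_le_one hη1.le hη2.le (by omega)
      have ha0d : 0 ≤ a 0 - d := by linarith [had 0]
      have hm : max ‖s i - s (i + (2*k+1))‖ (max (a i) (a (i + (2*k+1)))) ≤ d + η ^ i * M := by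
        refine max_le ih (max_le ?_ ?_)
        · have h1 := geo i
          have hpi : 0 ≤ η ^ i := pow_nonneg hη1.le i
          have h2 : η ^ i * (a 0 - d) ≤ η ^ i * M := mul_le_mul_of_nonneg_left haM hpi
          linarith
        · have h1 := geo (i + (2*k+1))
          have hpi' : 0 ≤ η ^ i := pow_nonneg hη1.le i
          have h2 : η ^ (i + (2*k+1)) * (a 0 - d) ≤ η ^ i * (a 0 - d) :=
            mul_le_mul_of_nonneg_right hpow ha0d
          have h3 : η ^ i * (a 0 - d) ≤ η ^ i * M := mul_le_mul_of_nonneg_left haM hpi'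
          linarith
      have hpi : 0 ≤ η ^ i := pow_nonneg hη1.le i
      have hmul : η * max ‖s i - s (i + (2*k+1))‖ (max (a i) (a (i + (2*k+1)))) ≤ η * (d + η ^ i * M) :=
        mul_le_mul_of_nonneg_left hm hη1.le
      calc ‖s (i+1) - s ((i+1) + (2*k+1))‖
          ≤ η * max ‖s i - s (i + (2*k+1))‖ (max (a i) (a (i + (2*k+1)))) + (1 - η) * d := h
        _ ≤ η * (d + η ^ i * M) + (1 - η) * d := by linarith
        _ = d + η ^ (i+1) * M := by ring
  have ha0d : 0 ≤ a 0 - d := by linarith [had 0]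
  have h1η : (0:ℝ) < 1 - η := by linarith
  -- the even subsequence is Cauchy
  have hcauchy : CauchySeq (fun n => s (2*n)) := by
    rw [Metric.cauchySeq_iff']
    intro ε hε
    obtain ⟨δ, hδ, HUC⟩ := uc_lemma Ω Δ hΩconv d hd0 hdle (ε/2) (by positivity)
    set K : ℝ := max (a 0 - d) M + 1 with hK_def
    have hK : (0:ℝ) < K := by
      have := le_max_left (a 0 - d) M
      simp only [hK_def]
      linarith
    obtain ⟨N, hN⟩ := exists_pow_lt_of_lt_one (show (0:ℝ) < δ/K by positivity) hη2
    rw [lt_div_iff₀ hK] at hN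
    refine ⟨N, fun n hn => ?_⟩
    rcases eq_or_lt_of_le hn with rfl | hn'
    · simpa using hε
    · have hpowmono : ∀ m : ℕ, N ≤ m → η ^ m * K ≤ δ := by
        intro m hm
        have h1 : η ^ m ≤ η ^ N := pow_le_pow_of_le_one hη1.le hη2.le hm
        nlinarith [pow_nonneg hη1.le m]
      have key1 : ‖s (2*N) - s (2*N+1)‖ ≤ d + δ := by
        have h1 : a (2*N) ≤ d + η ^ (2*N) * (a 0 - d) := geo _
        have h2 : η ^ (2*N) * (a 0 - d) ≤ η ^ (2*N) * K := by
          have := le_max_left (a 0 - d) M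
          have hp : (0:ℝ) ≤ η ^ (2*N) := pow_nonneg hη1.le _
          nlinarith
        have h3 := hpowmono (2*N) (by omega)
        have : a (2*N) = ‖s (2*N) - s (2*N+1)‖ := rfl
        linarith
      have key2 : ‖s (2*n) - s (2*N+1)‖ ≤ d + δ := by
        have h1 := cross (n - N - 1) (2*N+1)
        have hidx : 2*N+1 + (2*(n - N - 1)+1) = 2*n := by omega
        rw [hidx] at h1
        have h2 : η ^ (2*N+1) * M ≤ η ^ (2*N+1) * K := by
          have := le_max_right (a 0 - d) M
          have hp : (0:ℝ) ≤ η ^ (2*N+1) := pow_nonneg hη1.le _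
          nlinarith
        have h3 := hpowmono (2*N+1) (by omega)
        rw [norm_sub_rev]
        linarith
      have hmn := HUC (s (2*n)) ((hmem _).1 (even_two_mul n)) (s (2*N)) ((hmem _).1 (even_two_mul N))
        (s (2*N+1)) ((hmem _).2 (odd_two_mul_add_one N)) key2 key1
      rw [dist_eq_norm]
      calc ‖s (2*n) - s (2*N)‖ ≤ ε/2 := hmn
        _ < ε := by linarith
  obtain ⟨ϱ, hϱ⟩ := cauchySeq_tendsto_of_complete hcauchy
  have hϱΩ : ϱ ∈ Ω := hΩc.mem_of_tendsto hϱ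
    (Filter.Eventually.of_forall fun n => (hmem _).1 (even_two_mul n))
  refine ⟨ϱ, Or.inl hϱΩ, le_antisymm ?_ (hdle ϱ hϱΩ (Ξ ϱ) (hcycΩ hϱΩ))⟩
  by_contra hcon
  push_neg at hcon
  have hε : 0 < ‖ϱ - Ξ ϱ‖ - d := by linarith
  set ε' : ℝ := min ((‖ϱ - Ξ ϱ‖ - d)/4) ((1-η)*((‖ϱ - Ξ ϱ‖ - d)/2)) with hε'_def
  have hε'pos : 0 < ε' := lt_min (by positivity) (by positivity)
  have hε'1 : ε' ≤ (‖ϱ - Ξ ϱ‖ - d)/4 := min_le_left _ _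
  have hε'2 : ε' ≤ (1-η)*((‖ϱ - Ξ ϱ‖ - d)/2) := min_le_right _ _
  obtain ⟨N₁, hN₁⟩ := Metric.tendsto_atTop.mp hϱ ε' hε'pos
  obtain ⟨N₂, hN₂⟩ := exists_pow_lt_of_lt_one
    (show (0:ℝ) < ε'/(a 0 - d + 1) by positivity) hη2
  set n : ℕ := max N₁ N₂ with hn_def
  have hn1 : N₁ ≤ n := le_max_left _ _
  have hn2 : N₂ ≤ n := le_max_right _ _
  have hpow : ∀ m : ℕ, N₂ ≤ m → η ^ m * (a 0 - d) ≤ ε' := by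
    intro m hm
    have h1 : η ^ m ≤ η ^ N₂ := pow_le_pow_of_le_one hη1.le hη2.le hm
    rw [lt_div_iff₀ (by linarith : (0:ℝ) < a 0 - d + 1)] at hN₂
    nlinarith [pow_nonneg hη1.le m]
  have h3 : a (2*n) ≤ d + ε' := by
    have := geo (2*n)
    have := hpow (2*n) (by omega)
    linarith
  have h4 : a (2*n+1) ≤ d + ε' := by
    have := geo (2*n+1)
    have := hpow (2*n+1) (by omega)
    linarith
  have h5 : ‖ϱ - s (2*n)‖ ≤ ε' := by
    have := hN₁ n hn1
    rw [dist_eq_norm] at this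
    rw [norm_sub_rev]
    linarith
  have h6 : ‖ϱ - s (2*n+2)‖ ≤ ε' := by
    have h := hN₁ (n+1) (by omega)
    rw [dist_eq_norm] at h
    have hidx : 2*(n+1) = 2*n+2 := by ring
    rw [hidx] at h
    rw [norm_sub_rev]
    linarith
  have hϑ : s (2*n+1) ∈ Δ := (hmem _).2 (odd_two_mul_add_one n)
  have hc := hcontr ϱ hϱΩ (s (2*n+1)) hϑ
  rw [← hsucc (2*n+1)] at hc
  have hidx2 : 2*n+1+1 = 2*n+2 := by omega
  rw [hidx2] at hc
  have h7 : ‖ϱ - s (2*n+1)‖ ≤ d + 2*ε' := by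
    have tri := dist_triangle ϱ (s (2*n)) (s (2*n+1))
    simp only [dist_eq_norm] at tri
    have ha2n : ‖s (2*n) - s (2*n+1)‖ = a (2*n) := rfl
    linarith
  rcases le_or_gt ‖ϱ - Ξ ϱ‖ (d + 2*ε') with hcase | hcase
  · linarith
  · have hmax : max ‖ϱ - s (2*n+1)‖ (max ‖ϱ - Ξ ϱ‖ ‖s (2*n+1) - s (2*n+2)‖) ≤ ‖ϱ - Ξ ϱ‖ := by
      refine max_le (by linarith) (max_le le_rfl ?_)
      have heq : ‖s (2*n+1) - s (2*n+2)‖ = a (2*n+1) := rfl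
      linarith
    have hmul := mul_le_mul_of_nonneg_left hmax hη1.le
    have tri2 : ‖ϱ - Ξ ϱ‖ ≤ ‖ϱ - s (2*n+2)‖ + ‖s (2*n+2) - Ξ ϱ‖ := by
      have := dist_triangle ϱ (s (2*n+2)) (Ξ ϱ)
      simpa [dist_eq_norm] using this
    have hrev : ‖s (2*n+2) - Ξ ϱ‖ = ‖Ξ ϱ - s (2*n+2)‖ := norm_sub_rev _ _
    have hfin : ‖ϱ - Ξ ϱ‖ ≤ ε' + η * ‖ϱ - Ξ ϱ‖ + (1 - η) * d := by
      calc ‖ϱ - Ξ ϱ‖ ≤ ‖ϱ - s (2*n+2)‖ + ‖Ξ ϱ - s (2*n+2)‖ := by rw [← hrev]; exact tri2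
        _ ≤ ε' + (η * max ‖ϱ - s (2*n+1)‖ (max ‖ϱ - Ξ ϱ‖ ‖s (2*n+1) - s (2*n+2)‖) + (1-η)*d) := by
            exact add_le_add h6 hc
        _ ≤ ε' + η * ‖ϱ - Ξ ϱ‖ + (1 - η) * d := by linarith
    linarith [mul_pos h1η (show (0:ℝ) < ‖ϱ - Ξ ϱ‖ - d by linarith)]
end

section
/- Let X be a uniformly convex Banach space, Ω, Δ nonempty, closed and convex subsets of X, and Ξ : X → X a cyclic orbital contraction on Ω ∪ Δ with constant η ∈ (0,1). Fix ς₀ ∈ Ω and define ς_{n+1} = Ξς_n for all n ≥ 0. Then the sequence {ς_{2n}} is a Cauchy sequence in Ω. -/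
open Filter Metric

private lemma stmt9_arith {d δ γ t : ℝ} (hd : 0 < d) (hδ : 0 < δ) (hγ : 0 < γ)
    (hγδ : γ ≤ δ / 4) (hdw : d ≤ t) (h2w : 2 * t ≤ (2 - δ) * (d * (1 + γ))) : False := by
  nlinarith [mul_pos hd hδ, mul_pos hd (mul_pos hδ hγ),
    mul_le_mul_of_nonneg_left hγδ hd.le]

theorem stmt9 {X : Type*} [NormedAddCommGroup X] [NormedSpace ℝ X] [UniformConvexSpace X]
    [CompleteSpace X] (Ω Δ : Set X) (hΩ : Ω.Nonempty) (hΔ : Δ.Nonempty)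
    (hΩc : IsClosed Ω) (hΔc : IsClosed Δ) (hΩconv : Convex ℝ Ω) (hΔconv : Convex ℝ Δ)
    (Ξ : X → X) (η : ℝ) (hη : η ∈ Set.Ioo (0 : ℝ) 1)
    (hcycΩ : Set.MapsTo Ξ Ω Δ) (hcycΔ : Set.MapsTo Ξ Δ Ω)
    (hbdd : ∀ x : X, Bornology.IsBounded (Set.range fun n => Ξ^[n] x))
    (hcontr : ∀ ς ∈ Ω, ∀ ϑ ∈ Δ,
      ‖Ξ ς - Ξ ϑ‖ ≤ η * sSup { r : ℝ |
      (∃ i j : ℕ, Odd ((i : ℤ) - j) ∧ r = ‖Ξ^[i] ς - Ξ^[j] ς‖) ∨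
      (∃ k l : ℕ, Odd ((k : ℤ) - l) ∧ r = ‖Ξ^[k] ϑ - Ξ^[l] ϑ‖) ∨
      (∃ p q : ℕ, Even ((p : ℤ) - q) ∧ r = ‖Ξ^[p] ς - Ξ^[q] ϑ‖) }
        + (1 - η) * sInf (Set.image2 (fun x y => ‖x - y‖) Ω Δ))
    (ς₀ : X) (hς₀ : ς₀ ∈ Ω) :
    CauchySeq (fun n => Ξ^[2 * n] ς₀) := by
  obtain ⟨hη0, hη1⟩ := hη
  set x : ℕ → X := fun n => Ξ^[n] ς₀ with hxdef
  set d : ℝ := sInf (Set.image2 (fun x y => ‖x - y‖) Ω Δ) with hddef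
  -- membership of the orbit
  have hmem : ∀ n : ℕ, (Even n → x n ∈ Ω) ∧ (Odd n → x n ∈ Δ) := by
    intro n
    induction n with
    | zero => exact ⟨fun _ => hς₀, fun h => absurd h (by simp)⟩
    | succ n ih =>
      have hx : x (n + 1) = Ξ (x n) := Function.iterate_succ_apply' Ξ n ς₀
      constructor
      · intro h
        have hn : Odd n := by
          rcases Nat.even_or_odd n with he | ho
          · exact absurd h (by simp [Nat.even_add_one, he])
          · exact ho
        rw [hx]; exact hcycΔ (ih.2 hn)
      · intro h
        have hn : Even n := by
          rcases Nat.even_or_odd n with he | ho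
          · exact he
          · exact absurd h (by simp [Nat.odd_add_one, ho, Nat.not_even_iff_odd.mpr ho])
        rw [hx]; exact hcycΩ (ih.1 hn)
  -- lower bound for the distance set
  have himg_ne : (Set.image2 (fun x y => ‖x - y‖) Ω Δ).Nonempty :=
    ⟨_, Set.mem_image2_of_mem hΩ.choose_spec hΔ.choose_spec⟩
  have himg_bdd : BddBelow (Set.image2 (fun x y => ‖x - y‖) Ω Δ) := by
    refine ⟨0, ?_⟩
    rintro r ⟨a, _, b, _, rfl⟩
    positivity
  have hd_le : ∀ a ∈ Ω, ∀ b ∈ Δ, d ≤ ‖a - b‖ := fun a ha b hb =>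
    csInf_le himg_bdd (Set.mem_image2_of_mem ha hb)
  have hd0 : 0 ≤ d := le_csInf himg_ne (by rintro r ⟨a, _, b, _, rfl⟩; positivity)
  -- uniform bound on the orbit
  obtain ⟨C, hC⟩ := isBounded_iff_forall_norm_le.mp (hbdd ς₀)
  have hCb : ∀ i j : ℕ, ‖x i - x j‖ ≤ 2 * C := by
    intro i j
    have h1 : ‖x i‖ ≤ C := hC _ ⟨i, rfl⟩
    have h2 : ‖x j‖ ≤ C := hC _ ⟨j, rfl⟩
    calc ‖x i - x j‖ ≤ ‖x i‖ + ‖x j‖ := norm_sub_le _ _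
    _ ≤ 2 * C := by linarith
  -- the sup sequence
  set S : ℕ → Set ℝ := fun n =>
    { r : ℝ | ∃ i j : ℕ, n ≤ i ∧ n ≤ j ∧ Odd ((i : ℤ) - j) ∧ r = ‖x i - x j‖ } with hSdef
  have hSbdd : ∀ n, BddAbove (S n) := by
    intro n
    refine ⟨2 * C, ?_⟩
    rintro r ⟨i, j, _, _, _, rfl⟩
    exact hCb i j
  have hSne : ∀ n, (S n).Nonempty := by
    intro n
    refine ⟨‖x (n + 1) - x n‖, n + 1, n, Nat.le_succ n, le_refl _, ?_, rfl⟩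
    have : ((n + 1 : ℕ) : ℤ) - (n : ℤ) = 1 := by push_cast; ring
    rw [this]; exact odd_one
  set s : ℕ → ℝ := fun n => sSup (S n) with hsdef
  -- every element of S n is at least d
  have hdSn : ∀ n r, r ∈ S n → d ≤ r := by
    rintro n r ⟨i, j, _, _, hodd, rfl⟩
    obtain ⟨k, hk⟩ := hodd
    rcases Nat.even_or_odd i with ⟨u, hu⟩ | ⟨u, hu⟩ <;>
      rcases Nat.even_or_odd j with ⟨v, hv⟩ | ⟨v, hv⟩
    · exfalso; omega
    · exact hd_le _ ((hmem i).1 ⟨u, hu⟩) _ ((hmem j).2 ⟨v, hv⟩)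
    · rw [norm_sub_rev]; exact hd_le _ ((hmem j).1 ⟨v, hv⟩) _ ((hmem i).2 ⟨u, hu⟩)
    · exfalso; omega
  have hd_s : ∀ n, d ≤ s n := fun n =>
    le_trans (hdSn n _ (hSne n).choose_spec) (le_csSup (hSbdd n) (hSne n).choose_spec)
  -- the key contraction estimate
  have key0 : ∀ n a b : ℕ, n ≤ a → n ≤ b → Even a → Odd b →
      ‖Ξ (x a) - Ξ (x b)‖ ≤ η * s n + (1 - η) * d := by
    intro n a b hna hnb hae hbo
    have hab : Odd ((a : ℤ) - b) := by
      obtain ⟨u, hu⟩ := hae; obtain ⟨v, hv⟩ := hbo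
      exact ⟨u - v - 1, by push_cast [hu, hv]; ring⟩
    have h := hcontr (x a) ((hmem a).1 hae) (x b) ((hmem b).2 hbo)
    refine h.trans ?_
    have hsub : { r : ℝ |
        (∃ i j : ℕ, Odd ((i : ℤ) - j) ∧ r = ‖Ξ^[i] (x a) - Ξ^[j] (x a)‖) ∨
        (∃ k l : ℕ, Odd ((k : ℤ) - l) ∧ r = ‖Ξ^[k] (x b) - Ξ^[l] (x b)‖) ∨
        (∃ p q : ℕ, Even ((p : ℤ) - q) ∧ r = ‖Ξ^[p] (x a) - Ξ^[q] (x b)‖) } ⊆ S n := by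
      rintro r (⟨i, j, hodd, rfl⟩ | ⟨k, l, hodd, rfl⟩ | ⟨p, q, hev, rfl⟩)
      · refine ⟨i + a, j + a, by omega, by omega, ?_, ?_⟩
        · have : ((i + a : ℕ) : ℤ) - ((j + a : ℕ) : ℤ) = (i : ℤ) - j := by push_cast; ring
          rw [this]; exact hodd
        · simp [hxdef, Function.iterate_add_apply]
      · refine ⟨k + b, l + b, by omega, by omega, ?_, ?_⟩
        · have : ((k + b : ℕ) : ℤ) - ((l + b : ℕ) : ℤ) = (k : ℤ) - l := by push_cast; ring
          rw [this]; exact hodd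
        · simp [hxdef, Function.iterate_add_apply]
      · refine ⟨p + a, q + b, by omega, by omega, ?_, ?_⟩
        · have h2 : ((p + a : ℕ) : ℤ) - ((q + b : ℕ) : ℤ) = ((p : ℤ) - q) + ((a : ℤ) - b) := by
            push_cast; ring
          rw [h2]; exact hev.add_odd hab
        · simp [hxdef, Function.iterate_add_apply]
    have hTne : { r : ℝ |
        (∃ i j : ℕ, Odd ((i : ℤ) - j) ∧ r = ‖Ξ^[i] (x a) - Ξ^[j] (x a)‖) ∨
        (∃ k l : ℕ, Odd ((k : ℤ) - l) ∧ r = ‖Ξ^[k] (x b) - Ξ^[l] (x b)‖) ∨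
        (∃ p q : ℕ, Even ((p : ℤ) - q) ∧ r = ‖Ξ^[p] (x a) - Ξ^[q] (x b)‖) }.Nonempty := by
      exact ⟨‖Ξ^[1] (x a) - Ξ^[0] (x a)‖, Or.inl ⟨1, 0, ⟨0, by ring⟩, rfl⟩⟩
    have hsup : sSup { r : ℝ |
        (∃ i j : ℕ, Odd ((i : ℤ) - j) ∧ r = ‖Ξ^[i] (x a) - Ξ^[j] (x a)‖) ∨
        (∃ k l : ℕ, Odd ((k : ℤ) - l) ∧ r = ‖Ξ^[k] (x b) - Ξ^[l] (x b)‖) ∨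
        (∃ p q : ℕ, Even ((p : ℤ) - q) ∧ r = ‖Ξ^[p] (x a) - Ξ^[q] (x b)‖) } ≤ s n :=
      csSup_le_csSup (hSbdd n) hTne hsub
    have : (0 : ℝ) ≤ η := hη0.le
    nlinarith
  have key1 : ∀ n i j : ℕ, n + 1 ≤ i → n + 1 ≤ j → Odd ((i : ℤ) - j) →
      ‖x i - x j‖ ≤ η * s n + (1 - η) * d := by
    intro n i j hi hj hodd
    obtain ⟨i', rfl⟩ : ∃ i', i = i' + 1 := ⟨i - 1, by omega⟩
    obtain ⟨j', rfl⟩ : ∃ j', j = j' + 1 := ⟨j - 1, by omega⟩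
    obtain ⟨k, hk⟩ := hodd
    have hxi : x (i' + 1) = Ξ (x i') := Function.iterate_succ_apply' Ξ i' ς₀
    have hxj : x (j' + 1) = Ξ (x j') := Function.iterate_succ_apply' Ξ j' ς₀
    rcases Nat.even_or_odd i' with ⟨u, hu⟩ | ⟨u, hu⟩ <;>
      rcases Nat.even_or_odd j' with ⟨v, hv⟩ | ⟨v, hv⟩
    · exfalso; omega
    · rw [hxi, hxj]; exact key0 n i' j' (by omega) (by omega) ⟨u, hu⟩ ⟨v, hv⟩
    · rw [hxi, hxj, norm_sub_rev]
      exact key0 n j' i' (by omega) (by omega) ⟨v, hv⟩ ⟨u, hu⟩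
    · exfalso; omega
  have key2 : ∀ n, s (n + 1) ≤ η * s n + (1 - η) * d := by
    intro n
    refine csSup_le (hSne (n + 1)) ?_
    rintro r ⟨i, j, hi, hj, hodd, rfl⟩
    exact key1 n i j hi hj hodd
  -- geometric decay
  have hgeo : ∀ n, s n ≤ d + η ^ n * (s 0 - d) := by
    intro n
    induction n with
    | zero => simp
    | succ n ih =>
      have h1 := key2 n
      have h2 := hd_s 0
      have h3 : (0 : ℝ) ≤ η ^ n := pow_nonneg hη0.le n
      rw [pow_succ]
      nlinarith
  have htend : ∀ ε : ℝ, 0 < ε → ∃ N, s N ≤ d + ε := by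
    intro ε hε
    have hs0d : 0 ≤ s 0 - d := by linarith [hd_s 0]
    obtain ⟨n, hn⟩ := exists_pow_lt_of_lt_one (div_pos hε (by linarith : (0:ℝ) < s 0 - d + 1)) hη1
    refine ⟨n, (hgeo n).trans ?_⟩
    have h3 : (0 : ℝ) ≤ η ^ n := pow_nonneg hη0.le n
    have : η ^ n * (s 0 - d) ≤ (ε / (s 0 - d + 1)) * (s 0 - d + 1) := by
      have := hn.le
      nlinarith
    rw [div_mul_cancel₀ ε (by linarith : s 0 - d + 1 ≠ 0)] at this
    linarith
  -- membership of sup-set elements we will use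
  have hmemS : ∀ N m n : ℕ, N ≤ m → N ≤ n → ‖x (2 * m) - x (2 * n + 1)‖ ≤ s N := by
    intro N m n hm hn
    refine le_csSup (hSbdd N) ⟨2 * m, 2 * n + 1, by omega, by omega, ?_, rfl⟩
    exact ⟨(m : ℤ) - n - 1, by push_cast; ring⟩
  have hmemS2 : ∀ N n : ℕ, N ≤ n → ‖x (2 * n) - x (2 * n + 1)‖ ≤ s N := by
    intro N n hn
    refine le_csSup (hSbdd N) ⟨2 * n, 2 * n + 1, by omega, by omega, ?_, rfl⟩
    exact ⟨-1, by push_cast; ring⟩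
  -- now prove Cauchy
  rw [Metric.cauchySeq_iff]
  intro ε hε
  rcases eq_or_lt_of_le hd0 with hdz | hdpos
  · -- case d = 0
    obtain ⟨N, hN⟩ := htend (ε / 3) (by linarith)
    refine ⟨N, fun m hm n hn => ?_⟩
    have h1 := hmemS N m n hm hn
    have h2 := hmemS2 N n hn
    have : dist (Ξ^[2 * m] ς₀) (Ξ^[2 * n] ς₀) = ‖x (2 * m) - x (2 * n)‖ := by
      simp [hxdef, dist_eq_norm]
    rw [this]
    calc ‖x (2 * m) - x (2 * n)‖
        ≤ ‖x (2 * m) - x (2 * n + 1)‖ + ‖x (2 * n + 1) - x (2 * n)‖ := norm_sub_le_norm_sub_add_norm_sub _ _ _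
      _ = ‖x (2 * m) - x (2 * n + 1)‖ + ‖x (2 * n) - x (2 * n + 1)‖ := by rw [norm_sub_rev (x (2*n+1))]
      _ < ε := by rw [← hdz] at hN; linarith
  · -- case d > 0
    set ε' : ℝ := min (ε / (2 * d)) 1 with hε'def
    have hε' : 0 < ε' := lt_min (by positivity) one_pos
    obtain ⟨δ, hδ, Hδ⟩ := exists_forall_closed_ball_dist_add_le_two_sub X hε'
    set γ : ℝ := min (δ / 4) 1 with hγdef
    have hγ : 0 < γ := lt_min (by linarith) one_pos
    have hγ1 : γ ≤ 1 := min_le_right _ _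
    have hγδ : γ ≤ δ / 4 := min_le_left _ _
    set r : ℝ := d * (1 + γ) with hrdef
    have hrpos : 0 < r := by positivity
    have hdr : d < r := by nlinarith
    have hr2d : r ≤ 2 * d := by nlinarith
    obtain ⟨N, hN⟩ := htend (d * γ) (by positivity)
    have hsNr : s N ≤ r := by rw [hrdef]; nlinarith
    refine ⟨N, fun m hm n hn => ?_⟩
    have hdist : dist (Ξ^[2 * m] ς₀) (Ξ^[2 * n] ς₀) = ‖x (2 * m) - x (2 * n)‖ := by
      simp [hxdef, dist_eq_norm]
    rw [hdist]
    by_contra hcon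
    push_neg at hcon
    set y : X := x (2 * n + 1) with hydef
    have hy1 : ‖x (2 * m) - y‖ ≤ r := (hmemS N m n hm hn).trans hsNr
    have hy2 : ‖x (2 * n) - y‖ ≤ r := (hmemS2 N n hn).trans hsNr
    set u : X := r⁻¹ • (x (2 * m) - y) with hudef
    set v : X := r⁻¹ • (x (2 * n) - y) with hvdef
    have hu : ‖u‖ ≤ 1 := by
      rw [hudef, norm_smul, norm_inv, Real.norm_of_nonneg hrpos.le]
      rw [inv_mul_le_iff₀ hrpos]; simpa using hy1
    have hv : ‖v‖ ≤ 1 := by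
      rw [hvdef, norm_smul, norm_inv, Real.norm_of_nonneg hrpos.le]
      rw [inv_mul_le_iff₀ hrpos]; simpa using hy2
    have huv : ε' ≤ ‖u - v‖ := by
      have huveq : u - v = r⁻¹ • (x (2 * m) - x (2 * n)) := by
        rw [hudef, hvdef, ← smul_sub]; congr 1; abel
      rw [huveq, norm_smul, norm_inv, Real.norm_of_nonneg hrpos.le]
      have h1 : ε' ≤ ε / (2 * d) := min_le_left _ _
      have h2 : ε / (2 * d) ≤ ε / r := by
        apply div_le_div_of_nonneg_left hε.le hrpos hr2d
      rw [le_inv_mul_iff₀ hrpos]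
      have h3 : 2 * d * (ε / (2 * d)) = ε := by field_simp
      calc r * ε' ≤ 2 * d * (ε / (2 * d)) :=
            mul_le_mul hr2d h1 hε'.le (by linarith)
        _ = ε := h3
        _ ≤ ‖x (2 * m) - x (2 * n)‖ := hcon
    have h4 := Hδ hu hv huv
    have heq : u + v = r⁻¹ • (x (2 * m) + x (2 * n) - (y + y)) := by
      rw [hudef, hvdef, ← smul_add]; congr 1; abel
    have hsum : ‖x (2 * m) + x (2 * n) - (y + y)‖ ≤ (2 - δ) * r := by
      rw [heq, norm_smul, norm_inv, Real.norm_of_nonneg hrpos.le,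
        inv_mul_le_iff₀ hrpos] at h4
      linarith [h4]
    set w : X := (1 / 2 : ℝ) • x (2 * m) + (1 / 2 : ℝ) • x (2 * n) with hwdef
    have hw : w ∈ Ω :=
      hΩconv ((hmem (2 * m)).1 ⟨m, by omega⟩) ((hmem (2 * n)).1 ⟨n, by omega⟩)
        (by norm_num) (by norm_num) (by norm_num)
    have hdw : d ≤ ‖w - y‖ := hd_le w hw y ((hmem (2 * n + 1)).2 ⟨n, rfl⟩)
    have hweq : x (2 * m) + x (2 * n) - (y + y) = (2 : ℝ) • (w - y) := by
      rw [hwdef]; module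
    have h2w : (2 : ℝ) * ‖w - y‖ ≤ (2 - δ) * r := by
      rw [hweq] at hsum
      rw [norm_smul, Real.norm_of_nonneg (by norm_num : (0:ℝ) ≤ 2)] at hsum
      exact hsum
    rw [hrdef] at h2w
    exact stmt9_arith hdpos hδ hγ hγδ hdw h2w
end
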